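/- arXiv:2507.23405 — 9 statements merged into one kernel-verified Lean document; each statement's English description precedes it below -/
import Mathlib

section
/- Let p ≥ 1, let 𝓛 be a standard interleaved lattice in dimension p, let s = (s_1,…,s_p) with each s_k a positive integer, and let u ∈ ℤ^p. Then m(𝓛,s,u) ≤ m(𝓛,s,0_p), where 0_p denotes the zero vector of ℤ^p. -/
open scoped BigOperators Classical

/-- A standard interleaved lattice in dimension `p`: an additive subgroup of `ℤ^p`
containing `(2ℤ)^p` whose projection onto every coordinate is all of `ℤ`. -/
def IsStdIL (p : ℕ) (L : AddSubgroup (Fin p → ℤ)) : Prop :=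
  (∀ x : Fin p → ℤ, (∀ k, (2 : ℤ) ∣ x k) → x ∈ L) ∧
  (∀ (k : Fin p) (z : ℤ), ∃ x ∈ L, x k = z)

/-- `B(𝓛,s,u) = {x + u : x ∈ 𝓛} ∩ ∏_k {0,1,…,s_k−1}`. -/
def latticeBox (p : ℕ) (L : AddSubgroup (Fin p → ℤ)) (s : Fin p → ℕ)
    (u : Fin p → ℤ) : Set (Fin p → ℤ) :=
  {y | y - u ∈ L ∧ ∀ k, 0 ≤ y k ∧ y k < (s k : ℤ)}

/-- `m(𝓛,s,u)`, the cardinality of `B(𝓛,s,u)`. -/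
noncomputable def latticeSize (p : ℕ) (L : AddSubgroup (Fin p → ℤ)) (s : Fin p → ℕ)
    (u : Fin p → ℤ) : ℕ :=
  (latticeBox p L s u).ncard

/-- The `i`-th smallest element (0-indexed) of a finite set of reals. -/
noncomputable def nthLevel (γ : Finset ℝ) (i : ℕ) : ℝ :=
  (γ.sort (· ≤ ·)).getD i 0

/-- The interleaved lattice-based design
`D(𝓛,s,𝒴,u) = {(𝒴_{1(i_1)},…,𝒴_{p(i_p)}) : (i_1−1,…,i_p−1) ∈ B(𝓛,s,u)} ⊆ ℝ^p`. -/
noncomputable def design (p : ℕ) (L : AddSubgroup (Fin p → ℤ)) (s : Fin p → ℕ)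
    (Y : Fin p → Finset ℝ) (u : Fin p → ℤ) : Set (EuclideanSpace ℝ (Fin p)) :=
  {v | ∃ y ∈ latticeBox p L s u, ∀ k, v k = nthLevel (Y k) (y k).toNat}

/-- `d*(γ)`: minimum gap between adjacent elements of `γ`. -/
noncomputable def dstar (γ : Finset ℝ) : ℝ :=
  ⨅ i : Fin (γ.card - 1), (nthLevel γ (i.1 + 1) - nthLevel γ i.1)

/-- `d⁺(γ)`: minimum gap between elements two positions apart in `γ`. -/
noncomputable def dplus (γ : Finset ℝ) : ℝ :=
  ⨅ i : Fin (γ.card - 2), (nthLevel γ (i.1 + 2) - nthLevel γ i.1)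

open Finset in
/-- arithmetic helper -/
lemma arith_aux (a b X Y M T : ℕ) (hba : b ≤ a) (hXM : X ≤ M)
    (hsum : X + Y ≤ M + T) : a * X + b * Y ≤ a * M + b * T := by
  zify at *
  nlinarith [mul_nonneg (sub_nonneg.2 hba) (sub_nonneg.2 hXM),
    mul_le_mul_of_nonneg_left hsum (Int.natCast_nonneg b)]

open Finset in
lemma key_lemma {ι : Type*} [Fintype ι] [DecidableEq ι]
    (w : ι → ZMod 2 → ℕ) (hw : ∀ i, w i 1 ≤ w i 0) (K : Finset ι) :
    ∀ (H : AddSubgroup (ι → ZMod 2)) (c : ι → ZMod 2),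
    ∑ x ∈ univ.filter (· ∈ H), ∏ i ∈ K, w i (x i + c i)
      ≤ ∑ x ∈ univ.filter (· ∈ H), ∏ i ∈ K, w i (x i) := by
  classical
  have hz2 : ∀ a : ZMod 2, a = 0 ∨ a = 1 := by decide
  have hz2' : ∀ a : ZMod 2, a + a = 0 := by decide
  induction K using Finset.induction with
  | empty => intro H c; simp
  | @insert j K' hj IH =>
    intro H c
    -- the subgroup with j-th coordinate zero
    set H0 : AddSubgroup (ι → ZMod 2) :=
      H ⊓ (Pi.evalAddMonoidHom (fun _ : ι => ZMod 2) j).ker with hH0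
    have hmemH0 : ∀ x, x ∈ H0 ↔ x ∈ H ∧ x j = 0 := by
      intro x; simp [hH0, AddMonoidHom.mem_ker]
    -- notation for sums over H0
    set A : (ι → ZMod 2) → ℕ := fun d =>
      ∑ x ∈ univ.filter (· ∈ H0), ∏ i ∈ K', w i (x i + d i) with hA
    -- splitting of the sum over H
    have hsplit : ∀ d : ι → ZMod 2,
        ∑ x ∈ univ.filter (· ∈ H), ∏ i ∈ insert j K', w i (x i + d i)
        = w j (d j) * A d
          + ∑ x ∈ univ.filter (fun x => x ∈ H ∧ x j = 1),
              ∏ i ∈ insert j K', w i (x i + d i) := by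
      intro d
      rw [← Finset.sum_filter_add_sum_filter_not (univ.filter (· ∈ H))
        (fun x => x j = 0)]
      congr 1
      · rw [Finset.mul_sum]
        rw [Finset.filter_filter]
        rw [show (univ.filter (· ∈ H0)) = univ.filter (fun x => x ∈ H ∧ x j = 0) by
          apply Finset.filter_congr; intro x _; simp [hmemH0]]
        apply Finset.sum_congr rfl
        intro x hx
        simp only [Finset.mem_filter] at hx
        rw [Finset.prod_insert hj, hx.2.2, zero_add]
      · rw [Finset.filter_filter]
        apply Finset.sum_congr
        · apply Finset.filter_congr; intro x _
          constructor
          · rintro ⟨h1, h2⟩; exact ⟨h1, (hz2 (x j)).resolve_left h2⟩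
          · rintro ⟨h1, h2⟩; exact ⟨h1, by simp [h2]⟩
        · intro x _; rfl
    by_cases ht : ∃ t ∈ H, t j = 1
    · obtain ⟨t, htH, htj⟩ := ht
      -- translation bijection
      have htrans : ∀ (G : (ι → ZMod 2) → ℕ),
          ∑ x ∈ univ.filter (fun x => x ∈ H ∧ x j = 1), G x
          = ∑ y ∈ univ.filter (· ∈ H0), G (y + t) := by
        intro G
        have hcancel : ∀ x : ι → ZMod 2, x + t + t = x := by
          intro x; funext i; simp [add_assoc, hz2' (t i)]
        refine Finset.sum_nbij' (fun x => x + t) (fun y => y + t) ?_ ?_ ?_ ?_ ?_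
        · intro x hx
          simp only [Finset.mem_filter, Finset.mem_univ, true_and] at hx ⊢
          rw [hmemH0]
          refine ⟨H.add_mem hx.1 htH, ?_⟩
          simp [Pi.add_apply, hx.2, htj, hz2']
        · intro y hy
          simp only [Finset.mem_filter, Finset.mem_univ, true_and, hmemH0] at hy ⊢
          refine ⟨H.add_mem hy.1 htH, ?_⟩
          simp [Pi.add_apply, hy.2, htj]
        · intro x _; exact hcancel x
        · intro y _; exact hcancel y
        · intro x _; rw [hcancel x]
      have hpart : ∀ d : ι → ZMod 2,
          ∑ x ∈ univ.filter (fun x => x ∈ H ∧ x j = 1),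
              ∏ i ∈ insert j K', w i (x i + d i)
          = w j (1 + d j) * A (t + d) := by
        intro d
        rw [htrans]
        rw [Finset.mul_sum]
        apply Finset.sum_congr rfl
        intro y hy
        simp only [Finset.mem_filter, Finset.mem_univ, true_and, hmemH0] at hy
        rw [Finset.prod_insert hj]
        have : y j + t j + d j = 1 + d j := by rw [hy.2, htj, zero_add]
        simp only [Pi.add_apply, this]
        congr 1
        apply Finset.prod_congr rfl
        intro i _
        congr 1
        show y i + t i + d i = y i + (t i + d i)
        ring
      -- rewrite both sides
      have e1 : ∑ x ∈ univ.filter (· ∈ H), ∏ i ∈ insert j K', w i (x i)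
          = ∑ x ∈ univ.filter (· ∈ H), ∏ i ∈ insert j K',
              w i (x i + (0 : ι → ZMod 2) i) := by
        apply Finset.sum_congr rfl; intro x _
        apply Finset.prod_congr rfl; intro i _; norm_num
      have hRHS : ∑ x ∈ univ.filter (· ∈ H), ∏ i ∈ insert j K', w i (x i)
          = w j 0 * A 0 + w j 1 * A t := by
        rw [e1, hsplit 0, hpart 0]
        norm_num
      rw [hsplit c, hpart c, hRHS]
      -- facts
      have hXM : A (t + c) ≤ A 0 := by
        have := IH H0 (t + c)
        simpa [hA] using this
      have hXM' : A c ≤ A 0 := by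
        have := IH H0 c; simpa [hA] using this
      have hAsum : A c + A (t + c) ≤ A 0 + A t := by
        have hs2 : ∀ d : ι → ZMod 2,
            ∑ x ∈ univ.filter (· ∈ H), ∏ i ∈ K', w i (x i + d i)
            = A d + A (t + d) := by
          intro d
          rw [← Finset.sum_filter_add_sum_filter_not (univ.filter (· ∈ H))
            (fun x => x j = 0), Finset.filter_filter, Finset.filter_filter]
          congr 1
          · apply Finset.sum_congr
            · apply Finset.filter_congr; intro x _; simp [hmemH0]
            · intros; rfl
          · rw [show (univ.filter fun x => x ∈ H ∧ ¬x j = 0)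
                = univ.filter (fun x => x ∈ H ∧ x j = 1) by
              apply Finset.filter_congr; intro x _
              constructor
              · rintro ⟨h1, h2⟩; exact ⟨h1, (hz2 (x j)).resolve_left h2⟩
              · rintro ⟨h1, h2⟩; exact ⟨h1, by simp [h2]⟩]
            rw [htrans (fun x => ∏ i ∈ K', w i (x i + d i))]
            apply Finset.sum_congr rfl
            intro y _
            apply Finset.prod_congr rfl
            intro i _
            congr 1
            simp [Pi.add_apply]; ring
        have h1 := IH H c
        have h2 := hs2 c
        have h3 : ∑ x ∈ univ.filter (· ∈ H), ∏ i ∈ K', w i (x i)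
            = A 0 + A t := by
          have := hs2 0
          simpa using this
        rw [h2, h3] at h1
        exact h1
      rcases hz2 (c j) with hcj | hcj <;> rw [hcj]
      · -- c j = 0 : w0 * A c + w1 * A (t+c) ≤ w0 * A 0 + w1 * A t
        simp only [add_zero]
        exact arith_aux _ _ _ _ _ _ (hw j) hXM' hAsum
      · -- c j = 1 : w1 * A c + w0 * A (t+c) ≤ w0 * A 0 + w1 * A t
        have : (1 : ZMod 2) + 1 = 0 := by decide
        rw [this]
        rw [add_comm (w j 1 * A c)]
        exact arith_aux _ _ _ _ _ _ (hw j) hXM (by linarith [hAsum])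
    · -- no element with j-th coordinate 1
      push_neg at ht
      have hempty : (univ.filter (fun x : ι → ZMod 2 => x ∈ H ∧ x j = 1)) = ∅ := by
        apply Finset.filter_false_of_mem
        rintro x _ ⟨h1, h2⟩
        exact ht x h1 h2
      have e1 : ∑ x ∈ univ.filter (· ∈ H), ∏ i ∈ insert j K', w i (x i)
          = ∑ x ∈ univ.filter (· ∈ H), ∏ i ∈ insert j K',
              w i (x i + (0 : ι → ZMod 2) i) := by
        apply Finset.sum_congr rfl; intro x _
        apply Finset.prod_congr rfl; intro i _; norm_num
      have hRHS : ∑ x ∈ univ.filter (· ∈ H), ∏ i ∈ insert j K', w i (x i)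
          = w j 0 * A 0 := by
        rw [e1, hsplit 0, hempty]
        simp
      rw [hsplit c, hRHS, hempty]
      simp only [Finset.sum_empty, add_zero]
      apply Nat.mul_le_mul
      · rcases hz2 (c j) with h | h <;> rw [h]
        exact hw j
      · have := IH H0 c; simpa [hA] using this


open Finset

/-- `m(𝓛,s,u) ≤ m(𝓛,s,0_p)`. -/
theorem stmt_0 (p : ℕ) (hp : 1 ≤ p) (L : AddSubgroup (Fin p → ℤ)) (hL : IsStdIL p L)
    (s : Fin p → ℕ) (hs : ∀ k, 1 ≤ s k) (u : Fin p → ℤ) :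
    latticeSize p L s u ≤ latticeSize p L s 0 := by
  classical
  set π : (Fin p → ℤ) →+ (Fin p → ZMod 2) :=
    { toFun := fun x k => (x k : ZMod 2)
      map_zero' := by funext k; simp
      map_add' := by
        intro x y; funext k
        show ((x k + y k : ℤ) : ZMod 2) = (x k : ZMod 2) + (y k : ZMod 2)
        push_cast; ring } with hπ
  set H : AddSubgroup (Fin p → ZMod 2) := L.map π with hH
  have hπapp : ∀ (x : Fin p → ℤ) (k : Fin p), π x k = (x k : ZMod 2) := fun x k => rfl
  have hmem : ∀ x : Fin p → ℤ, x ∈ L ↔ π x ∈ H := by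
    intro x
    constructor
    · intro hx; exact ⟨x, hx, rfl⟩
    · rintro ⟨l, hl, hlx⟩
      have hdvd : ∀ k, (2 : ℤ) ∣ (x - l) k := by
        intro k
        have h1 : (l k : ZMod 2) = (x k : ZMod 2) := congrFun hlx k
        have h2 : (((x - l) k : ℤ) : ZMod 2) = 0 := by
          push_cast [Pi.sub_apply]
          rw [← h1]; ring
        exact (ZMod.intCast_zmod_eq_zero_iff_dvd _ 2).1 h2
      have h2 : x - l ∈ L := hL.1 _ hdvd
      have h3 := L.add_mem h2 hl
      simpa using h3
  -- the box as a finset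
  set box : (Fin p → ℤ) → Finset (Fin p → ℤ) := fun v =>
    (Fintype.piFinset (fun k => Finset.Ico (0 : ℤ) (s k))).filter
      (fun y => y - v ∈ L) with hbox
  have hsize : ∀ v, latticeSize p L s v = (box v).card := by
    intro v
    have hset : latticeBox p L s v = ↑(box v) := by
      ext y
      simp only [latticeBox, Set.mem_setOf_eq, hbox, Finset.coe_filter,
        Fintype.mem_piFinset, Finset.mem_Ico]
      tauto
    rw [latticeSize, hset, Set.ncard_coe_finset]
  -- per-coordinate weights
  set w : Fin p → ZMod 2 → ℕ := fun k a =>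
    ((Finset.Ico (0 : ℤ) (s k)).filter (fun t : ℤ => ((t : ZMod 2) = a : Prop))).card with hwdef
  have hw : ∀ k, w k 1 ≤ w k 0 := by
    intro k
    apply Finset.card_le_card_of_injOn (fun t => t - 1)
    · intro t ht
      simp only [Finset.mem_coe, Finset.mem_filter, Finset.mem_Ico] at ht ⊢
      have ht0 : t ≠ 0 := by
        intro h; rw [h] at ht
        simp at ht
      refine ⟨⟨by omega, by omega⟩, ?_⟩
      push_cast
      rw [ht.2]; ring
    · intro a _ b _ hab
      simpa using hab
  -- the counting formula
  have hcount : ∀ v : Fin p → ℤ, (box v).card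
      = ∑ x ∈ univ.filter (· ∈ H), ∏ k, w k (x k + π v k) := by
    intro v
    rw [Finset.card_eq_sum_card_fiberwise
      (f := π) (t := (univ : Finset (Fin p → ZMod 2)))
      (fun y _ => Finset.mem_univ (π y))]
    have hfiber : ∀ ε : Fin p → ZMod 2,
        ((box v).filter (fun y => π y = ε)).card
        = if ε - π v ∈ H then ∏ k, w k (ε k) else 0 := by
      intro ε
      have hN : ((Fintype.piFinset (fun k => Finset.Ico (0 : ℤ) (s k))).filter
          (fun y => π y = ε)).card = ∏ k, w k (ε k) := by
        rw [show (Fintype.piFinset (fun k => Finset.Ico (0 : ℤ) (s k))).filter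
            (fun y => π y = ε)
            = Fintype.piFinset (fun k =>
                (Finset.Ico (0 : ℤ) (s k)).filter (fun t : ℤ => ((t : ZMod 2) = ε k : Prop))) by
          ext y
          simp only [Finset.mem_filter, Fintype.mem_piFinset, funext_iff, hπapp,
            ← forall_and]]
        rw [Fintype.card_piFinset]
      by_cases hε : ε - π v ∈ H
      · rw [if_pos hε, ← hN]
        congr 1
        simp only [hbox]
        rw [Finset.filter_filter]
        apply Finset.filter_congr
        intro y _
        constructor
        · rintro ⟨-, h2⟩; exact h2
        · intro h2
          refine ⟨?_, h2⟩
          rw [hmem, map_sub, h2]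
          exact hε
      · rw [if_neg hε]
        rw [Finset.card_eq_zero, Finset.filter_eq_empty_iff]
        intro y hy
        simp only [hbox, Finset.mem_filter] at hy
        intro h2
        apply hε
        rw [← h2, ← map_sub, ← hmem]
        exact hy.2
    rw [Finset.sum_congr rfl (fun ε _ => hfiber ε)]
    rw [← Finset.sum_filter]
    symm
    refine Finset.sum_nbij' (fun x => x + π v) (fun ε => ε - π v) ?_ ?_ ?_ ?_ ?_
    · intro x hx
      simp only [Finset.mem_filter, Finset.mem_univ, true_and] at hx ⊢
      simpa using hx
    · intro ε hε
      simp only [Finset.mem_filter, Finset.mem_univ, true_and] at hε ⊢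
      exact hε
    · intro x _; simp
    · intro ε _; simp
    · intro x _
      apply Finset.prod_congr rfl
      intro k _
      rfl
  -- conclude
  rw [hsize u, hsize 0, hcount u, hcount 0]
  have h0 : π (0 : Fin p → ℤ) = 0 := map_zero π
  calc ∑ x ∈ univ.filter (· ∈ H), ∏ k, w k (x k + π u k)
      ≤ ∑ x ∈ univ.filter (· ∈ H), ∏ k, w k (x k) :=
        key_lemma w hw Finset.univ H (π u)
    _ = ∑ x ∈ univ.filter (· ∈ H), ∏ k, w k (x k + π 0 k) := by
        apply Finset.sum_congr rfl
        intro x _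
        apply Finset.prod_congr rfl
        intro k _
        rw [h0]
        simp
end

section
/- Let p ≥ 1, let 𝓛 be a standard interleaved lattice in dimension p, let s = (s_1,…,s_p) with each s_k a positive integer, let u ∈ ℤ^p, and let q be the integer with |𝓛 ∩ {0,1}^p| = 2^q. Then 2^{q−p} · ∏_{k : e_k ∉ 𝓛} (2⌊s_k/2⌋) · ∏_{k : e_k ∈ 𝓛} s_k ≤ m(𝓛,s,u) ≤ 2^{q−p} · ∏_{k : e_k ∉ 𝓛} (2⌈s_k/2⌉) · ∏_{k : e_k ∈ 𝓛} s_k, where e_k denotes the k-th standard unit vector of ℤ^p. -/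
open scoped BigOperators Classical

/-! ### Auxiliary machinery -/

/-- Number of integers in `[0, s)` with residue `j` mod 2. -/
noncomputable def Npar (s : ℕ) (j : ZMod 2) : ℕ :=
  ((Finset.Ico (0:ℤ) s).filter (fun t : ℤ => ((t : ZMod 2) = j))).card

lemma Npar_succ (s : ℕ) (j : ZMod 2) :
    Npar (s+1) j = Npar s j + (if ((s:ℤ) : ZMod 2) = j then 1 else 0) := by
  unfold Npar
  have h2 : ((s+1:ℕ):ℤ) = (s:ℤ)+1 := by push_cast; ring
  have h1 : Finset.Ico (0:ℤ) ((s:ℤ)+1) = insert (s:ℤ) (Finset.Ico (0:ℤ) s) := by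
    rw [Finset.Ico_insert_right (by omega)]; ext t; simp
  rw [h2, h1, Finset.filter_insert]
  split <;> simp [Finset.card_insert_of_notMem, Finset.mem_filter]

lemma intCast_zmod2_even {n : ℕ} (h : Even n) : ((n:ℤ) : ZMod 2) = 0 := by
  obtain ⟨m, hm⟩ := h
  subst hm; push_cast
  rw [← two_mul, show ((2:ZMod 2)) = 0 by decide, zero_mul]

lemma intCast_zmod2_odd {n : ℕ} (h : Odd n) : ((n:ℤ) : ZMod 2) = 1 := by
  obtain ⟨m, hm⟩ := h
  subst hm; push_cast
  rw [show ((2:ZMod 2)) = 0 by decide]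
  ring

lemma Npar_val (s : ℕ) : Npar s 0 = (s+1)/2 ∧ Npar s 1 = s/2 := by
  induction s with
  | zero => constructor <;> simp [Npar]
  | succ n ih =>
    obtain ⟨h0, h1⟩ := ih
    rcases Nat.even_or_odd n with he | ho
    · have hcast := intCast_zmod2_even he
      obtain ⟨m, hm⟩ := he
      constructor
      · rw [Npar_succ, hcast, if_pos rfl, h0]; omega
      · rw [Npar_succ, hcast, if_neg (by decide), h1]; omega
    · have hcast := intCast_zmod2_odd ho
      obtain ⟨m, hm⟩ := ho
      constructor
      · rw [Npar_succ, hcast, if_neg (by decide), h0]; omega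
      · rw [Npar_succ, hcast, if_pos rfl, h1]; omega

lemma Npar_sum (s : ℕ) : Npar s 0 + Npar s 1 = s := by
  have := Npar_val s; omega

lemma nat_sub_helper (a b c : ℕ) (h : a + b = c) : b = c - a := by omega

lemma zmod2_cases (j : ZMod 2) : j = 0 ∨ j = 1 := by revert j; decide

lemma Npar_lb (s : ℕ) (j : ZMod 2) : s/2 ≤ Npar s j := by
  have h := Npar_val s
  rcases zmod2_cases j with h' | h' <;> subst h' <;> omega

lemma Npar_ub (s : ℕ) (j : ZMod 2) : Npar s j ≤ (s+1)/2 := by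
  have h := Npar_val s
  rcases zmod2_cases j with h' | h' <;> subst h' <;> omega

/-- Coordinatewise reduction mod 2. -/
noncomputable def rho (p : ℕ) : (Fin p → ℤ) →+ (Fin p → ZMod 2) :=
  (Int.castAddHom (ZMod 2)).compLeft (Fin p)

lemma rho_apply (p : ℕ) (x : Fin p → ℤ) (k : Fin p) : rho p x k = ((x k : ℤ) : ZMod 2) := rfl

lemma mem_iff_rho {p : ℕ} (L : AddSubgroup (Fin p → ℤ))
    (hL : ∀ x : Fin p → ℤ, (∀ k, (2:ℤ) ∣ x k) → x ∈ L) (x : Fin p → ℤ) :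
    x ∈ L ↔ rho p x ∈ L.map (rho p) := by
  constructor
  · exact fun h => AddSubgroup.mem_map_of_mem _ h
  · rintro ⟨x', hx', hxx⟩
    have hd : x - x' ∈ L := by
      apply hL
      intro k
      have h1 : ((x' k : ℤ) : ZMod 2) = ((x k : ℤ) : ZMod 2) := congrFun hxx k
      have : ((x k - x' k : ℤ) : ZMod 2) = 0 := by push_cast; rw [h1]; ring
      exact_mod_cast (ZMod.intCast_zmod_eq_zero_iff_dvd _ 2).1 this
    have := L.add_mem hx' hd
    simpa using this

lemma rho_single {p : ℕ} (k : Fin p) : rho p (Pi.single k (1:ℤ)) = Pi.single k (1 : ZMod 2) := by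
  funext j
  rw [rho_apply]
  by_cases h : j = k
  · subst h; simp
  · simp [Pi.single_apply, h, (Ne.symm h)]

lemma zmod2_univ : (Finset.univ : Finset (ZMod 2)) = {0, 1} := by decide

lemma zmod2_sum (g : ZMod 2 → ℕ) : ∑ j : ZMod 2, g j = g 0 + g 1 := by
  rw [zmod2_univ, Finset.sum_insert (by decide), Finset.sum_singleton]

lemma sum_factor {p : ℕ} (P : Fin p → Prop) (C : Finset (Fin p → ZMod 2))
    (hC : ∀ v0 ∈ C, ∀ v : Fin p → ZMod 2, (∀ k, ¬ P k → v k = v0 k) → v ∈ C)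
    (g : Fin p → ZMod 2 → ℕ) :
    ∑ v ∈ C, ∏ k, g k (v k)
      = ∑ w ∈ C.image (fun v k => if P k then 0 else v k),
          ∏ k, (if P k then (g k 0 + g k 1) else g k (w k)) := by
  classical
  set φ : (Fin p → ZMod 2) → (Fin p → ZMod 2) := fun v k => if P k then 0 else v k with hφ
  rw [← Finset.sum_fiberwise_of_maps_to (fun v hv => Finset.mem_image_of_mem φ hv)
      (fun v => ∏ k, g k (v k))]
  apply Finset.sum_congr rfl
  intro w hw
  obtain ⟨v0, hv0, hv0w⟩ := Finset.mem_image.1 hw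
  have hfib : C.filter (fun v => φ v = w)
      = Fintype.piFinset (fun k => if P k then (Finset.univ : Finset (ZMod 2)) else {w k}) := by
    ext v
    simp only [Finset.mem_filter, Fintype.mem_piFinset]
    constructor
    · rintro ⟨hvC, hvw⟩ k
      by_cases hk : P k
      · simp [hk]
      · simp only [hk, if_neg hk, Finset.mem_singleton]
        have := congrFun hvw k
        simpa [hφ, hk] using this
    · intro h
      have hoff : ∀ k, ¬ P k → v k = v0 k := by
        intro k hk
        have h1 := h k
        rw [if_neg hk, Finset.mem_singleton] at h1
        have h2 := congrFun hv0w k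
        simp only [hφ, if_neg hk] at h2
        rw [h1, ← h2]
      refine ⟨hC v0 hv0 v hoff, ?_⟩
      funext k
      by_cases hk : P k
      · have h2 := congrFun hv0w k
        simp only [hφ, if_pos hk] at h2 ⊢
        rw [← h2]
      · have h1 := h k
        rw [if_neg hk, Finset.mem_singleton] at h1
        simp only [hφ, if_neg hk]
        exact h1
  rw [hfib, ← Finset.prod_univ_sum]
  apply Finset.prod_congr rfl
  intro k _
  by_cases hk : P k
  · rw [if_pos hk, if_pos hk, zmod2_sum]
  · rw [if_neg hk, if_neg hk, Finset.sum_singleton]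

lemma box_count {p : ℕ} (L : AddSubgroup (Fin p → ℤ))
    (hL2 : ∀ x : Fin p → ℤ, (∀ k, (2:ℤ) ∣ x k) → x ∈ L) (s : Fin p → ℕ) (u : Fin p → ℤ) :
    latticeSize p L s u =
      ∑ v ∈ Finset.univ.filter
          (fun v : Fin p → ZMod 2 => v - rho p u ∈ L.map (rho p)),
        ∏ k, Npar (s k) (v k) := by
  classical
  set V := L.map (rho p) with hV
  set Bfin : Finset (Fin p → ℤ) :=
    (Fintype.piFinset fun k => Finset.Ico (0:ℤ) (s k)).filter (fun y => y - u ∈ L) with hB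
  have hbox : latticeBox p L s u = ↑Bfin := by
    ext y
    simp only [latticeBox, Set.mem_setOf_eq, hB, Finset.coe_filter, Fintype.mem_piFinset,
      Finset.mem_Ico]
    tauto
  have hsize : latticeSize p L s u = Bfin.card := by
    rw [latticeSize, hbox, Set.ncard_coe_finset]
  rw [hsize]
  have hmaps : ∀ y ∈ Bfin, rho p y ∈ Finset.univ.filter
      (fun v : Fin p → ZMod 2 => v - rho p u ∈ V) := by
    intro y hy
    simp only [Finset.mem_filter, Finset.mem_univ, true_and]
    rw [hB, Finset.mem_filter] at hy
    have := (mem_iff_rho L hL2 (y - u)).1 hy.2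
    rwa [map_sub] at this
  rw [Finset.card_eq_sum_card_fiberwise hmaps]
  apply Finset.sum_congr rfl
  intro v hv
  rw [Finset.mem_filter] at hv
  have hfib : Bfin.filter (fun y => rho p y = v)
      = Fintype.piFinset (fun k => (Finset.Ico (0:ℤ) (s k)).filter
          (fun t : ℤ => ((t : ZMod 2) = v k))) := by
    ext y
    simp only [hB, Finset.mem_filter, Fintype.mem_piFinset, Finset.mem_Ico]
    constructor
    · rintro ⟨⟨h1, h2⟩, h3⟩ k
      exact ⟨h1 k, by rw [← rho_apply, h3]⟩
    · intro h
      have hr : rho p y = v := by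
        funext k
        rw [rho_apply]
        exact (h k).2
      refine ⟨⟨fun k => (h k).1, ?_⟩, hr⟩
      rw [mem_iff_rho L hL2, map_sub, hr]
      exact hv.2
  rw [hfib, Fintype.card_piFinset]
  rfl

lemma val_intCast_zmod2 (j : ZMod 2) : (((j.val : ℕ) : ℤ) : ZMod 2) = j := by
  push_cast
  exact ZMod.natCast_rightInverse j

lemma coset_card {p : ℕ} (L : AddSubgroup (Fin p → ℤ))
    (hL2 : ∀ x : Fin p → ℤ, (∀ k, (2:ℤ) ∣ x k) → x ∈ L) (u : Fin p → ℤ) :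
    (Finset.univ.filter (fun v : Fin p → ZMod 2 => v - rho p u ∈ L.map (rho p))).card
      = {x : Fin p → ℤ | x ∈ L ∧ ∀ k, x k = 0 ∨ x k = 1}.ncard := by
  classical
  set V := L.map (rho p) with hV
  set VF : Finset (Fin p → ZMod 2) := Finset.univ.filter (· ∈ V) with hVF
  have hC : Finset.univ.filter (fun v : Fin p → ZMod 2 => v - rho p u ∈ V)
      = VF.image (· + rho p u) := by
    ext v
    simp only [Finset.mem_filter, Finset.mem_univ, true_and, Finset.mem_image, hVF]
    constructor
    · intro h; exact ⟨v - rho p u, by simpa using h, by ring⟩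
    · rintro ⟨w, hw, rfl⟩; simpa using hw
  rw [hC, Finset.card_image_of_injective _ (add_left_injective _)]
  set rep : (Fin p → ZMod 2) → (Fin p → ℤ) := fun v k => ((v k).val : ℤ) with hrep
  have hrepinj : Function.Injective rep := by
    intro v w h
    funext k
    have := congrFun h k
    simp only [hrep] at this
    have : (((v k).val : ℤ) : ZMod 2) = (((w k).val : ℤ) : ZMod 2) := by rw [this]
    rwa [val_intCast_zmod2, val_intCast_zmod2] at this
  have hset : {x : Fin p → ℤ | x ∈ L ∧ ∀ k, x k = 0 ∨ x k = 1} = ↑(VF.image rep) := by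
    ext x
    simp only [Set.mem_setOf_eq, Finset.coe_image, Set.mem_image, Finset.mem_coe,
      Finset.mem_filter, Finset.mem_univ, true_and, hVF]
    constructor
    · rintro ⟨hxL, hx01⟩
      refine ⟨rho p x, (mem_iff_rho L hL2 x).1 hxL, ?_⟩
      funext k
      simp only [hrep, rho_apply]
      rcases hx01 k with h | h <;> rw [h] <;> decide
    · rintro ⟨v, hv, rfl⟩
      constructor
      · rw [mem_iff_rho L hL2]
        have : rho p (rep v) = v := by
          funext k
          rw [rho_apply]
          exact val_intCast_zmod2 (v k)
        rwa [this]
      · intro k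
        have := ZMod.val_lt (v k)
        simp only [hrep]
        omega
  rw [hset, Set.ncard_coe_finset, Finset.card_image_of_injective _ hrepinj]

lemma coset_closed {p : ℕ} (L : AddSubgroup (Fin p → ℤ)) (u : Fin p → ℤ) :
    ∀ v0 ∈ Finset.univ.filter
        (fun v : Fin p → ZMod 2 => v - rho p u ∈ L.map (rho p)),
      ∀ v : Fin p → ZMod 2, (∀ k, ¬ (Pi.single k (1:ℤ) ∈ L) → v k = v0 k) →
        v ∈ Finset.univ.filter
          (fun v : Fin p → ZMod 2 => v - rho p u ∈ L.map (rho p)) := by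
  classical
  intro v0 hv0 v hoff
  rw [Finset.mem_filter] at hv0 ⊢
  refine ⟨Finset.mem_univ _, ?_⟩
  have hd : v - v0 ∈ L.map (rho p) := by
    have hrepr : v - v0 = ∑ k, Pi.single k ((v - v0) k) := (Finset.univ_sum_single _).symm
    rw [hrepr]
    apply AddSubgroup.sum_mem
    intro k _
    by_cases hk : Pi.single k (1:ℤ) ∈ L
    · rcases zmod2_cases ((v - v0) k) with h | h
      · rw [h, Pi.single_zero]; exact AddSubgroup.zero_mem _
      · rw [h, ← rho_single k]
        exact AddSubgroup.mem_map_of_mem _ hk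
    · have : (v - v0) k = 0 := by
        have := hoff k hk
        simp [Pi.sub_apply, this]
      rw [this, Pi.single_zero]; exact AddSubgroup.zero_mem _
  have : v - rho p u = (v0 - rho p u) + (v - v0) := by ring
  rw [this]
  exact AddSubgroup.add_mem _ hv0.2 hd

/-- size bounds
`2^{q−p} ∏_{e_k ∉ 𝓛} (2⌊s_k/2⌋) ∏_{e_k ∈ 𝓛} s_k ≤ m(𝓛,s,u) ≤
 2^{q−p} ∏_{e_k ∉ 𝓛} (2⌈s_k/2⌉) ∏_{e_k ∈ 𝓛} s_k`. -/
theorem stmt_1 (p : ℕ) (hp : 1 ≤ p) (L : AddSubgroup (Fin p → ℤ)) (hL : IsStdIL p L)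
    (s : Fin p → ℕ) (hs : ∀ k, 1 ≤ s k) (u : Fin p → ℤ) (q : ℕ)
    (hq : {x : Fin p → ℤ | x ∈ L ∧ ∀ k, x k = 0 ∨ x k = 1}.ncard = 2 ^ q) :
    (2 : ℝ) ^ ((q : ℤ) - (p : ℤ)) *
        ∏ k : Fin p,
          (if Pi.single k (1 : ℤ) ∈ L then (s k : ℝ) else 2 * ((s k / 2 : ℕ) : ℝ))
      ≤ (latticeSize p L s u : ℝ) ∧
    (latticeSize p L s u : ℝ)
      ≤ (2 : ℝ) ^ ((q : ℤ) - (p : ℤ)) *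
        ∏ k : Fin p,
          (if Pi.single k (1 : ℤ) ∈ L then (s k : ℝ) else 2 * (((s k + 1) / 2 : ℕ) : ℝ)) := by
  classical
  obtain ⟨hL2, _⟩ := hL
  set P : Fin p → Prop := fun k => Pi.single k (1:ℤ) ∈ L with hP
  set C : Finset (Fin p → ZMod 2) :=
    Finset.univ.filter (fun v : Fin p → ZMod 2 => v - rho p u ∈ L.map (rho p)) with hCdef
  have hclosed := coset_closed L u
  set W : Finset (Fin p → ZMod 2) := C.image (fun v k => if P k then 0 else v k) with hW
  set t : ℕ := (Finset.univ.filter P).card with ht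
  -- counting
  have hm : latticeSize p L s u
      = ∑ w ∈ W, ∏ k, (if P k then Npar (s k) 0 + Npar (s k) 1 else Npar (s k) (w k)) := by
    rw [box_count L hL2 s u, sum_factor P C hclosed (fun k j => Npar (s k) j)]
  have hNsum : ∀ k, Npar (s k) 0 + Npar (s k) 1 = s k := fun k => Npar_sum (s k)
  have hm' : latticeSize p L s u
      = ∑ w ∈ W, ∏ k, (if P k then s k else Npar (s k) (w k)) := by
    rw [hm]
    refine Finset.sum_congr rfl fun w _ => Finset.prod_congr rfl fun k _ => ?_
    by_cases hk : P k
    · rw [if_pos hk, if_pos hk, hNsum]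
    · rw [if_neg hk, if_neg hk]
  -- cardinality of C and W
  have hCcard : C.card = 2 ^ q := by rw [hCdef, coset_card L hL2 u, hq]
  have hWcard : W.card * 2 ^ t = 2 ^ q := by
    have h1 : ∑ v ∈ C, ∏ k, (fun _ (_ : ZMod 2) => 1) k (v k)
        = ∑ w ∈ W, ∏ k, (if P k then 1 + 1 else 1) := by
      exact sum_factor P C hclosed (fun _ _ => 1)
    simp only [Finset.prod_const_one, Finset.sum_const, smul_eq_mul, mul_one] at h1
    have h2 : ∏ k : Fin p, (if P k then 1 + 1 else 1) = 2 ^ t := by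
      rw [Finset.prod_ite, Finset.prod_const, Finset.prod_const, one_pow, mul_one, ht]
    rw [h2] at h1
    rw [← h1]
    exact hCcard
  have htp : t ≤ p := by
    have := Finset.card_filter_le (Finset.univ : Finset (Fin p)) P
    simpa [ht] using this
  -- per-term bounds
  have hlow : ∀ w ∈ W, ∏ k, (if P k then s k else s k / 2)
      ≤ ∏ k, (if P k then s k else Npar (s k) (w k)) := by
    intro w _
    apply Finset.prod_le_prod'
    intro k _
    by_cases hk : P k
    · rw [if_pos hk, if_pos hk]
    · rw [if_neg hk, if_neg hk]; exact Npar_lb _ _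
  have hhigh : ∀ w ∈ W, ∏ k, (if P k then s k else Npar (s k) (w k))
      ≤ ∏ k, (if P k then s k else (s k + 1) / 2) := by
    intro w _
    apply Finset.prod_le_prod'
    intro k _
    by_cases hk : P k
    · rw [if_pos hk, if_pos hk]
    · rw [if_neg hk, if_neg hk]; exact Npar_ub _ _
  have hlb : W.card * ∏ k, (if P k then s k else s k / 2) ≤ latticeSize p L s u := by
    rw [hm']
    calc W.card * ∏ k, (if P k then s k else s k / 2)
        = ∑ _w ∈ W, ∏ k, (if P k then s k else s k / 2) := by
          rw [Finset.sum_const, smul_eq_mul]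
      _ ≤ ∑ w ∈ W, ∏ k, (if P k then s k else Npar (s k) (w k)) :=
          Finset.sum_le_sum hlow
  have hub : latticeSize p L s u ≤ W.card * ∏ k, (if P k then s k else (s k + 1) / 2) := by
    rw [hm']
    calc ∑ w ∈ W, ∏ k, (if P k then s k else Npar (s k) (w k))
        ≤ ∑ _w ∈ W, ∏ k, (if P k then s k else (s k + 1) / 2) :=
          Finset.sum_le_sum hhigh
      _ = W.card * ∏ k, (if P k then s k else (s k + 1) / 2) := by
          rw [Finset.sum_const, smul_eq_mul]
  -- real algebra
  have hWreal : (2 : ℝ) ^ ((q : ℤ) - (p : ℤ)) * 2 ^ (p - t) = (W.card : ℝ) := by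
    have h2t : (2:ℝ) ^ t ≠ 0 := by positivity
    have hcast : (W.card : ℝ) * 2 ^ t = 2 ^ q := by exact_mod_cast hWcard
    have hz : (2 : ℝ) ^ ((q : ℤ) - (p : ℤ)) * 2 ^ (p - t)
        = (2:ℝ) ^ ((q:ℤ) - (t:ℤ)) := by
      rw [← zpow_natCast (2:ℝ) (p - t), ← zpow_add₀ (two_ne_zero)]
      congr 1
      push_cast [Nat.cast_sub htp]
      ring
    rw [hz, zpow_sub₀ (two_ne_zero), zpow_natCast, zpow_natCast]
    field_simp
    linarith [hcast]
  have hprodsplit : ∀ (a : Fin p → ℕ),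
      (∏ k, (if P k then (s k : ℝ) else 2 * ((a k : ℕ) : ℝ)))
        = 2 ^ (p - t) * ((∏ k, (if P k then s k else a k) : ℕ) : ℝ) := by
    intro a
    have h1 : (∏ k, (if P k then (s k : ℝ) else 2 * ((a k : ℕ) : ℝ)))
        = (∏ k, (if P k then (1:ℝ) else 2)) * ∏ k, (if P k then (s k : ℝ) else (a k : ℝ)) := by
      rw [← Finset.prod_mul_distrib]
      refine Finset.prod_congr rfl fun k _ => ?_
      by_cases hk : P k <;> simp [hk]
    have h2 : (∏ k, (if P k then (1:ℝ) else 2)) = 2 ^ (p - t) := by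
      rw [Finset.prod_ite, Finset.prod_const, Finset.prod_const, one_pow, one_mul]
      congr 1
      have h4 := Finset.card_filter_add_card_filter_not (s := Finset.univ) (p := P)
      simp only [Finset.card_univ, Fintype.card_fin] at h4
      rw [ht]
      exact nat_sub_helper _ _ _ h4
    have h3 : ((∏ k, (if P k then s k else a k) : ℕ) : ℝ)
        = ∏ k, (if P k then (s k : ℝ) else (a k : ℝ)) := by
      push_cast
      refine Finset.prod_congr rfl fun k _ => ?_
      by_cases hk : P k <;> simp [hk]
    rw [h1, h2, h3]
  constructor
  · rw [hprodsplit (fun k => s k / 2), ← mul_assoc, hWreal]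
    have : (W.card : ℝ) * ((∏ k, (if P k then s k else s k / 2) : ℕ) : ℝ)
        ≤ (latticeSize p L s u : ℝ) := by exact_mod_cast hlb
    exact this
  · rw [hprodsplit (fun k => (s k + 1) / 2), ← mul_assoc, hWreal]
    have : (latticeSize p L s u : ℝ)
        ≤ (W.card : ℝ) * ((∏ k, (if P k then s k else (s k + 1) / 2) : ℕ) : ℝ) := by
      exact_mod_cast hub
    exact this
end

section
/- Let p ≥ 1, let 𝓛 be a standard interleaved lattice in dimension p, let s = (s_1,…,s_p) with each s_k an integer ≥ 2, let u ∈ ℤ^p, and for each k let 𝒴_k ⊂ ℝ be a finite set with exactly s_k elements. Then ρ(D(𝓛,s,𝒴,u)) = ρ(D(𝓛,s,𝒴,0_p)): the separation distance of the interleaved lattice-based design is unchanged by the translation vector u. -/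
open scoped BigOperators Classical

/- ## Auxiliary lemmas -/

private lemma nth_lt_nth (γ : Finset ℝ) {a b : ℕ} (hab : a < b) (hb : b < γ.card) :
    nthLevel γ a < nthLevel γ b := by
  have hlen : (γ.sort (· ≤ ·)).length = γ.card := Finset.length_sort _
  have ha' : a < (γ.sort (· ≤ ·)).length := by omega
  have hb' : b < (γ.sort (· ≤ ·)).length := by omega
  unfold nthLevel
  rw [List.getD_eq_getElem _ _ ha', List.getD_eq_getElem _ _ hb']
  exact List.pairwise_iff_getElem.mp (Finset.sortedLT_sort γ).pairwise a b ha' hb' hab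

private lemma nth_le_nth (γ : Finset ℝ) {a b : ℕ} (hab : a ≤ b) (hb : b < γ.card) :
    nthLevel γ a ≤ nthLevel γ b := by
  rcases eq_or_lt_of_le hab with h | h
  · exact le_of_eq (by rw [h])
  · exact (nth_lt_nth γ h hb).le

private lemma nth_ne (γ : Finset ℝ) {a b : ℤ} (h0a : 0 ≤ a) (has : a < (γ.card : ℤ))
    (h0b : 0 ≤ b) (hbs : b < (γ.card : ℤ)) (hab : a ≠ b) :
    nthLevel γ a.toNat ≠ nthLevel γ b.toNat := by
  rcases lt_trichotomy a b with h | h | h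
  · exact ne_of_lt (nth_lt_nth γ (by omega) (by omega))
  · exact absurd h hab
  · exact ne_of_gt (nth_lt_nth γ (by omega) (by omega))

private lemma gap_le (γ : Finset ℝ) {a b a' b' : ℤ} (h0 : 0 ≤ a) (h1 : a ≤ a')
    (h2 : a' ≤ b') (h3 : b' ≤ b) (hb : b < (γ.card : ℤ)) :
    |nthLevel γ b'.toNat - nthLevel γ a'.toNat| ≤ |nthLevel γ b.toNat - nthLevel γ a.toNat| := by
  have k1 : nthLevel γ a.toNat ≤ nthLevel γ a'.toNat := nth_le_nth γ (by omega) (by omega)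
  have k2 : nthLevel γ a'.toNat ≤ nthLevel γ b'.toNat := nth_le_nth γ (by omega) (by omega)
  have k3 : nthLevel γ b'.toNat ≤ nthLevel γ b.toNat := nth_le_nth γ (by omega) (by omega)
  rw [abs_of_nonneg (by linarith), abs_of_nonneg (by linarith)]
  linarith

/-- Per-coordinate parity adjustment. -/
private lemma coord_adjust (γ : Finset ℝ) {s : ℕ} (hs : 2 ≤ s) (hγ : γ.card = s)
    (i j t : ℤ) (hi0 : 0 ≤ i) (hi1 : i < (s : ℤ)) (hj0 : 0 ≤ j) (hj1 : j < (s : ℤ)) :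
    ∃ i' j' : ℤ, 0 ≤ i' ∧ i' < (s : ℤ) ∧ 0 ≤ j' ∧ j' < (s : ℤ) ∧
      (i' - i - t) % 2 = 0 ∧ (j' - j - t) % 2 = 0 ∧
      |nthLevel γ i'.toNat - nthLevel γ j'.toNat| ≤
        |nthLevel γ i.toNat - nthLevel γ j.toNat| ∧
      ((i - j) % 2 ≠ 0 → i' ≠ j') := by
  have hcard : (γ.card : ℤ) = (s : ℤ) := by exact_mod_cast hγ
  by_cases ht : t % 2 = 0
  · exact ⟨i, j, hi0, hi1, hj0, hj1, by omega, by omega, le_refl _, fun h => by omega⟩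
  · by_cases hij : i = j
    · by_cases h2 : i + 1 < (s : ℤ)
      · exact ⟨i + 1, i + 1, by omega, by omega, by omega, by omega, by omega, by omega,
          by simp, fun h => by omega⟩
      · exact ⟨i - 1, i - 1, by omega, by omega, by omega, by omega, by omega, by omega,
          by simp, fun h => by omega⟩
    · rcases lt_or_gt_of_ne hij with h | h
      · -- i < j
        by_cases h1 : j = i + 1
        · refine ⟨j, i, hj0, hj1, hi0, hi1, by omega, by omega, ?_, fun _ => by omega⟩
          rw [abs_sub_comm]
        · -- j ≥ i + 2
          refine ⟨i + 1, j - 1, by omega, by omega, by omega, by omega, by omega, by omega,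
            ?_, fun hodd => by omega⟩
          rw [abs_sub_comm (nthLevel γ (i+1).toNat), abs_sub_comm (nthLevel γ i.toNat)]
          exact gap_le γ hi0 (by omega) (by omega) (by omega) (by omega)
      · -- j < i
        by_cases h1 : i = j + 1
        · refine ⟨j, i, hj0, hj1, hi0, hi1, by omega, by omega, ?_, fun _ => by omega⟩
          rw [abs_sub_comm]
        · refine ⟨i - 1, j + 1, by omega, by omega, by omega, by omega, by omega, by omega,
            ?_, fun hodd => by omega⟩
          exact gap_le γ hj0 (by omega) (by omega) (by omega) (by omega)

private lemma mem_L_of {p : ℕ} {L : AddSubgroup (Fin p → ℤ)} (hL : IsStdIL p L)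
    {v w : Fin p → ℤ} (hw : w ∈ L) (hpar : ∀ k, (v k - w k) % 2 = 0) : v ∈ L := by
  have hmem : v - w ∈ L := hL.1 (v - w) (fun k => by
    have := hpar k
    simp only [Pi.sub_apply]
    omega)
  have : w + (v - w) = v := by abel
  rw [← this]
  exact L.add_mem hw hmem

private lemma edist_le_of_coord {p : ℕ} (x y x' y' : EuclideanSpace ℝ (Fin p))
    (h : ∀ k, |x' k - y' k| ≤ |x k - y k|) : edist x' y' ≤ edist x y := by
  rw [edist_dist, edist_dist]
  apply ENNReal.ofReal_le_ofReal
  rw [EuclideanSpace.dist_eq, EuclideanSpace.dist_eq]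
  apply Real.sqrt_le_sqrt
  apply Finset.sum_le_sum
  intro k _
  rw [Real.dist_eq, Real.dist_eq]
  exact pow_le_pow_left₀ (abs_nonneg _) (h k) 2

/-- Pair transfer: a distinct pair in the box for `u` yields a distinct pair in the
box for `u'` whose coordinatewise level gaps are no larger. -/
private lemma pair_transfer {p : ℕ} {L : AddSubgroup (Fin p → ℤ)} (hL : IsStdIL p L)
    {s : Fin p → ℕ} (hs : ∀ k, 2 ≤ s k) {Y : Fin p → Finset ℝ} (hY : ∀ k, (Y k).card = s k)
    (u u' : Fin p → ℤ) {y z : Fin p → ℤ}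
    (hy : y ∈ latticeBox p L s u) (hz : z ∈ latticeBox p L s u)
    (hne : ∃ k, nthLevel (Y k) (y k).toNat ≠ nthLevel (Y k) (z k).toNat) :
    ∃ y' z' : Fin p → ℤ, y' ∈ latticeBox p L s u' ∧ z' ∈ latticeBox p L s u' ∧
      (∃ k, nthLevel (Y k) (y' k).toNat ≠ nthLevel (Y k) (z' k).toNat) ∧
      ∀ k, |nthLevel (Y k) (y' k).toNat - nthLevel (Y k) (z' k).toNat| ≤
           |nthLevel (Y k) (y k).toNat - nthLevel (Y k) (z k).toNat| := by
  obtain ⟨hyL, hyB⟩ := hy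
  obtain ⟨hzL, hzB⟩ := hz
  obtain ⟨k1, hk1⟩ := hne
  have hyz1 : y k1 ≠ z k1 := fun h => hk1 (by rw [h])
  by_cases hodd : ∃ k, (y k - z k) % 2 ≠ 0
  · -- Case A: some odd coordinate difference
    obtain ⟨k0, hk0⟩ := hodd
    choose i' j' h1 h2 h3 h4 h5 h6 h7 h8 using fun k =>
      coord_adjust (Y k) (hs k) (hY k) (y k) (z k) (u' k - u k)
        (hyB k).1 (hyB k).2 (hzB k).1 (hzB k).2
    refine ⟨i', j', ⟨?_, fun k => ⟨h1 k, h2 k⟩⟩, ⟨?_, fun k => ⟨h3 k, h4 k⟩⟩, ?_, h7⟩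
    · exact mem_L_of hL hyL (fun k => by
        have := h5 k
        simp only [Pi.sub_apply]
        omega)
    · exact mem_L_of hL hzL (fun k => by
        have := h6 k
        simp only [Pi.sub_apply]
        omega)
    · refine ⟨k0, nth_ne (Y k0) (h1 k0) ?_ (h3 k0) ?_ (h8 k0 hk0)⟩
      · rw [hY k0]; exact h2 k0
      · rw [hY k0]; exact h4 k0
  · -- Case B: all coordinate differences are even
    push_neg at hodd
    set a : ℤ := min (y k1) (z k1) with ha
    set b : ℤ := max (y k1) (z k1) with hb
    have hev1 : (y k1 - z k1) % 2 = 0 := hodd k1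
    have hab2 : a + 2 ≤ b := by
      rcases le_total (y k1) (z k1) with h | h <;>
        simp only [ha, hb, min_eq_left h, max_eq_right h, min_eq_right h, max_eq_left h] <;>
        omega
    have ha0 : 0 ≤ a := le_min (hyB k1).1 (hzB k1).1
    have hbs : b < (s k1 : ℤ) := max_lt (hyB k1).2 (hzB k1).2
    obtain ⟨l, hlL, hl⟩ : ∃ l ∈ L, (l k1 + (u' k1 - u k1)) % 2 = 0 := by
      by_cases h : (u' k1 - u k1) % 2 = 0
      · exact ⟨0, L.zero_mem, by simpa using h⟩
      · obtain ⟨x, hx, hx1⟩ := hL.2 k1 1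
        exact ⟨x, hx, by rw [hx1]; omega⟩
    set r : Fin p → ℤ := fun k => if (y k + (u' k - u k) + l k) % 2 = 0 then 0 else 1 with hr
    set y' : Fin p → ℤ := fun k => if k = k1 then a else r k with hy'
    set z' : Fin p → ℤ := fun k => if k = k1 then a + 2 else r k with hz'
    have hrpar : ∀ k, (r k - (y k + (u' k - u k) + l k)) % 2 = 0 := fun k => by
      simp only [hr]; split_ifs with h <;> omega
    have hr01 : ∀ k, 0 ≤ r k ∧ r k < (s k : ℤ) := fun k => by
      have := hs k
      simp only [hr]; split_ifs <;> constructor <;> [omega; omega; omega; omega]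
    have hapar : (a - y k1) % 2 = 0 := by
      rcases min_choice (y k1) (z k1) with h | h <;> rw [← ha] at h <;> omega
    have hwL : y - u + l ∈ L := L.add_mem hyL hlL
    have hy'mem : y' - u' ∈ L := by
      apply mem_L_of hL hwL
      intro k
      simp only [Pi.sub_apply, Pi.add_apply, hy']
      by_cases hk : k = k1
      · subst hk
        rw [if_pos rfl]
        omega
      · rw [if_neg hk]
        have := hrpar k
        omega
    have hz'mem : z' - u' ∈ L := by
      apply mem_L_of hL hwL
      intro k
      simp only [Pi.sub_apply, Pi.add_apply, hz']
      by_cases hk : k = k1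
      · subst hk
        rw [if_pos rfl]
        omega
      · rw [if_neg hk]
        have := hrpar k
        omega
    refine ⟨y', z', ⟨hy'mem, fun k => ?_⟩, ⟨hz'mem, fun k => ?_⟩, ⟨k1, ?_⟩, fun k => ?_⟩
    · simp only [hy']
      by_cases hk : k = k1
      · subst hk; rw [if_pos rfl]; omega
      · rw [if_neg hk]; exact hr01 k
    · simp only [hz']
      by_cases hk : k = k1
      · subst hk; rw [if_pos rfl]; omega
      · rw [if_neg hk]; exact hr01 k
    · simp only [hy', hz', if_pos rfl]
      exact nth_ne (Y k1) ha0 (by rw [hY k1]; omega) (by omega) (by rw [hY k1]; omega)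
        (by omega)
    · by_cases hk : k = k1
      · subst hk
        simp only [hy', hz', if_pos rfl]
        rw [abs_sub_comm]
        have hmain : |nthLevel (Y k) (a+2).toNat - nthLevel (Y k) a.toNat| ≤
            |nthLevel (Y k) b.toNat - nthLevel (Y k) a.toNat| :=
          gap_le (Y k) ha0 (le_refl a) (by omega) hab2 (by rw [hY k]; exact hbs)
        refine hmain.trans (le_of_eq ?_)
        rcases le_total (y k) (z k) with h | h
        · simp only [ha, hb, min_eq_left h, max_eq_right h]
          rw [abs_sub_comm]
        · simp only [ha, hb, min_eq_right h, max_eq_left h]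
      · simp only [hy', hz', if_neg hk, sub_self, abs_zero]
        exact abs_nonneg _

private lemma einfsep_le_translate (p : ℕ) (L : AddSubgroup (Fin p → ℤ)) (hL : IsStdIL p L)
    (s : Fin p → ℕ) (hs : ∀ k, 2 ≤ s k) (Y : Fin p → Finset ℝ) (hY : ∀ k, (Y k).card = s k)
    (u u' : Fin p → ℤ) :
    (design p L s Y u').einfsep ≤ (design p L s Y u).einfsep := by
  rw [Set.le_einfsep_iff]
  intro v hv w hw hvw
  obtain ⟨y, hy, hvY⟩ := hv
  obtain ⟨z, hz, hwY⟩ := hw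
  have hne : ∃ k, nthLevel (Y k) (y k).toNat ≠ nthLevel (Y k) (z k).toNat := by
    by_contra h
    push_neg at h
    apply hvw
    rw [WithLp.ext_iff]
    funext k
    rw [hvY k, hwY k, h k]
  obtain ⟨y', z', hy', hz', ⟨k0, hk0⟩, hgap⟩ := pair_transfer hL hs hY u u' hy hz hne
  set v' : EuclideanSpace ℝ (Fin p) := WithLp.toLp 2 fun k => nthLevel (Y k) (y' k).toNat with hv'
  set w' : EuclideanSpace ℝ (Fin p) := WithLp.toLp 2 fun k => nthLevel (Y k) (z' k).toNat with hw'
  have hv'mem : v' ∈ design p L s Y u' := ⟨y', hy', fun k => rfl⟩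
  have hw'mem : w' ∈ design p L s Y u' := ⟨z', hz', fun k => rfl⟩
  have hne' : v' ≠ w' := fun h => hk0 (congrArg (fun x : EuclideanSpace ℝ (Fin p) => x k0) h)
  refine (Set.einfsep_le_edist_of_mem hv'mem hw'mem hne').trans ?_
  apply edist_le_of_coord
  intro k
  rw [hvY k, hwY k]
  exact hgap k

/-- the separation distance of an interleaved lattice-based design
is unchanged by the translation vector `u`. -/
theorem stmt_3 (p : ℕ) (hp : 1 ≤ p) (L : AddSubgroup (Fin p → ℤ)) (hL : IsStdIL p L)
    (s : Fin p → ℕ) (hs : ∀ k, 2 ≤ s k) (u : Fin p → ℤ)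
    (Y : Fin p → Finset ℝ) (hY : ∀ k, (Y k).card = s k) :
    (design p L s Y u).einfsep = (design p L s Y 0).einfsep := by
  exact le_antisymm (einfsep_le_translate p L hL s hs Y hY 0 u)
    (einfsep_le_translate p L hL s hs Y hY u 0)
end

section
/- Let p ≥ 1, let 𝓛 be a standard interleaved lattice in dimension p, let s = (s_1,…,s_p) with each s_k an integer ≥ 2, and for each k let 𝒴_k ⊂ ℝ be a finite set with exactly s_k elements. Let H = 𝓛 ∩ {0,1}^p. Then ρ(D(𝓛,s,𝒴,0_p)) = min( min_{x ∈ H, x ≠ 0} ( Σ_{k : x_k = 1} d*(𝒴_k)² )^{1/2}, min_{k : s_k > 2} d⁺(𝒴_k) ), where the second minimum is interpreted as +∞ when no coordinate k satisfies s_k > 2. -/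
open scoped BigOperators Classical

lemma nthLevel_lt (γ : Finset ℝ) {i j : ℕ} (hij : i < j) (hj : j < γ.card) :
    nthLevel γ i < nthLevel γ j := by
  have hlen : (γ.sort (· ≤ ·)).length = γ.card := γ.length_sort _
  have hi : i < (γ.sort (· ≤ ·)).length := by omega
  have hj' : j < (γ.sort (· ≤ ·)).length := by omega
  have hsort : (γ.sort (· ≤ ·)).Pairwise (· < ·) := γ.sortedLT_sort.pairwise
  have := hsort.rel_get_of_lt (a := ⟨i, hi⟩) (b := ⟨j, hj'⟩) (by simpa using hij)
  rw [nthLevel, nthLevel, List.getD_eq_getElem _ _ hi, List.getD_eq_getElem _ _ hj']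
  simpa [List.get_eq_getElem] using this

lemma nthLevel_le (γ : Finset ℝ) {i j : ℕ} (hij : i ≤ j) (hj : j < γ.card) :
    nthLevel γ i ≤ nthLevel γ j := by
  rcases eq_or_lt_of_le hij with h | h
  · simp [h]
  · exact (nthLevel_lt γ h hj).le

lemma dstar_le (γ : Finset ℝ) {i : ℕ} (h : i + 1 < γ.card) :
    dstar γ ≤ nthLevel γ (i + 1) - nthLevel γ i := by
  rw [dstar]
  exact ciInf_le (Set.Finite.bddBelow (Set.finite_range _)) (⟨i, by omega⟩ : Fin (γ.card - 1))

lemma dplus_le (γ : Finset ℝ) {i : ℕ} (h : i + 2 < γ.card) :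
    dplus γ ≤ nthLevel γ (i + 2) - nthLevel γ i := by
  rw [dplus]
  exact ciInf_le (Set.Finite.bddBelow (Set.finite_range _)) (⟨i, by omega⟩ : Fin (γ.card - 2))

lemma dstar_nonneg (γ : Finset ℝ) : 0 ≤ dstar γ := by
  rw [dstar]; apply Real.iInf_nonneg
  intro i
  have : i.1 + 1 < γ.card := by omega
  linarith [nthLevel_lt γ (Nat.lt_succ_self i.1) this]

lemma dplus_nonneg (γ : Finset ℝ) : 0 ≤ dplus γ := by
  rw [dplus]; apply Real.iInf_nonneg
  intro i
  have : i.1 + 2 < γ.card := by omega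
  linarith [nthLevel_lt γ (by omega : i.1 < i.1 + 2) this]

lemma dstar_exists (γ : Finset ℝ) (h : 2 ≤ γ.card) :
    ∃ i : ℕ, i + 1 < γ.card ∧ nthLevel γ (i + 1) - nthLevel γ i = dstar γ := by
  have : Nonempty (Fin (γ.card - 1)) := ⟨⟨0, by omega⟩⟩
  obtain ⟨i, hi⟩ := exists_eq_ciInf_of_finite
    (f := fun i : Fin (γ.card - 1) => nthLevel γ (i.1 + 1) - nthLevel γ i.1)
  exact ⟨i.1, by omega, by rw [hi, dstar]⟩

lemma dplus_exists (γ : Finset ℝ) (h : 3 ≤ γ.card) :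
    ∃ i : ℕ, i + 2 < γ.card ∧ nthLevel γ (i + 2) - nthLevel γ i = dplus γ := by
  have : Nonempty (Fin (γ.card - 2)) := ⟨⟨0, by omega⟩⟩
  obtain ⟨i, hi⟩ := exists_eq_ciInf_of_finite
    (f := fun i : Fin (γ.card - 2) => nthLevel γ (i.1 + 2) - nthLevel γ i.1)
  exact ⟨i.1, by omega, by rw [hi, dplus]⟩

set_option maxHeartbeats 4000000 in
/-- exact formula for the separation distance of an ILDM with `u = 0`:
`ρ(D) = min( min_{x ∈ H, x ≠ 0} (Σ_{x_k=1} d*(𝒴_k)²)^{1/2}, min_{k : s_k > 2} d⁺(𝒴_k) )`,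
where infima over empty index sets are `+∞`. -/
theorem stmt_5 (p : ℕ) (hp : 1 ≤ p) (L : AddSubgroup (Fin p → ℤ)) (hL : IsStdIL p L)
    (s : Fin p → ℕ) (hs : ∀ k, 2 ≤ s k)
    (Y : Fin p → Finset ℝ) (hY : ∀ k, (Y k).card = s k) :
    (design p L s Y 0).einfsep =
      min
        (⨅ x : {x : Fin p → ℤ // x ∈ L ∧ (∀ k, x k = 0 ∨ x k = 1) ∧ x ≠ 0},
          ENNReal.ofReal
            (Real.sqrt (∑ k ∈ Finset.univ.filter (fun k => x.1 k = 1), dstar (Y k) ^ 2)))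
        (⨅ k : {k : Fin p // 2 < s k}, ENNReal.ofReal (dplus (Y k.1))) := by
  obtain ⟨hLe, hLp⟩ := hL
  have parityMem : ∀ x y : Fin p → ℤ, x ∈ L → (∀ k, (2:ℤ) ∣ (y k - x k)) → y ∈ L := by
    intro x y hx h
    have h2 : y - x ∈ L := hLe _ (fun k => h k)
    have h3 := add_mem h2 hx
    simpa using h3
  have cardY : ∀ k, 2 ≤ (Y k).card := fun k => by rw [hY]; exact hs k
  have edistEq : ∀ v w : EuclideanSpace ℝ (Fin p),
      edist v w = ENNReal.ofReal (Real.sqrt (∑ k, dist (v k) (w k) ^ 2)) := by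
    intro v w; rw [edist_dist, EuclideanSpace.dist_eq]
  apply le_antisymm
  · apply le_min
    · -- first infimum: pairs differing by a 0/1 vector of L
      apply le_iInf
      rintro ⟨x, hxL, hx01, hxne⟩
      choose i hi1 hi2 using fun k => dstar_exists (Y k) (cardY k)
      set yn : Fin p → ℕ :=
        fun k => if x k = 1 then (if Even (i k) then i k else i k + 1) else 0 with hyn
      set zn : Fin p → ℕ :=
        fun k => if x k = 1 then (if Even (i k) then i k + 1 else i k) else 0 with hzn
      set yv : Fin p → ℤ := fun k => (yn k : ℤ) with hyv
      set zv : Fin p → ℤ := fun k => (zn k : ℤ) with hzv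
      have hyL : yv ∈ L := by
        apply hLe
        intro k
        simp only [hyv, hyn]
        split_ifs with h1 h2
        · obtain ⟨m, hm⟩ := h2; refine ⟨m, by push_cast [hm]; ring⟩
        · rw [Nat.not_even_iff_odd] at h2
          obtain ⟨m, hm⟩ := h2; refine ⟨m + 1, by push_cast [hm]; ring⟩
        · exact ⟨0, by norm_num⟩
      have hzL : zv ∈ L := by
        apply parityMem x _ hxL
        intro k
        simp only [hzv, hzn]
        rcases hx01 k with h0 | h1
        · rw [h0]; simp
        · rw [h1, if_pos rfl]
          split_ifs with h2
          · obtain ⟨m, hm⟩ := h2; refine ⟨m, by push_cast [hm]; ring⟩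
          · rw [Nat.not_even_iff_odd] at h2
            obtain ⟨m, hm⟩ := h2; refine ⟨m, by push_cast [hm]; ring⟩
      have hynlt : ∀ k, yn k < s k := by
        intro k
        have := hi1 k
        rw [hY] at this
        simp only [hyn]
        split_ifs <;> omega
      have hznlt : ∀ k, zn k < s k := by
        intro k
        have := hi1 k
        rw [hY] at this
        simp only [hzn]
        split_ifs <;> omega
      have hyB : yv ∈ latticeBox p L s 0 := by
        refine ⟨by simpa using hyL, fun k => ⟨Int.natCast_nonneg _, ?_⟩⟩
        have := hynlt k
        simp only [hyv]
        exact_mod_cast this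
      have hzB : zv ∈ latticeBox p L s 0 := by
        refine ⟨by simpa using hzL, fun k => ⟨Int.natCast_nonneg _, ?_⟩⟩
        have := hznlt k
        simp only [hzv]
        exact_mod_cast this
      set v : EuclideanSpace ℝ (Fin p) := WithLp.toLp 2 (fun k => nthLevel (Y k) (yv k).toNat) with hv
      set w : EuclideanSpace ℝ (Fin p) := WithLp.toLp 2 (fun k => nthLevel (Y k) (zv k).toNat) with hw
      have hvD : v ∈ design p L s Y 0 := ⟨yv, hyB, fun k => rfl⟩
      have hwD : w ∈ design p L s Y 0 := ⟨zv, hzB, fun k => rfl⟩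
      have hvk : ∀ k, v k = nthLevel (Y k) (yn k) := by
        intro k; simp [hv, hyv, Int.toNat_natCast]
      have hwk : ∀ k, w k = nthLevel (Y k) (zn k) := by
        intro k; simp [hw, hzv, Int.toNat_natCast]
      obtain ⟨k₁, hk₁⟩ := Function.ne_iff.mp hxne
      have hk1' : x k₁ = 1 := (hx01 k₁).resolve_left hk₁
      have hne : v ≠ w := by
        intro h
        have h2 := congrArg (· k₁) h
        rw [hvk k₁, hwk k₁] at h2
        have hcard := hi1 k₁
        simp only [hyn, hzn, hk1', if_pos] at h2
        by_cases he : Even (i k₁)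
        · rw [if_pos he, if_pos he] at h2
          exact absurd h2 (nthLevel_lt (Y k₁) (Nat.lt_succ_self _) hcard).ne
        · rw [if_neg he, if_neg he] at h2
          exact absurd h2.symm (nthLevel_lt (Y k₁) (Nat.lt_succ_self _) hcard).ne
      have hsum : ∑ k, dist (v k) (w k) ^ 2
          = ∑ k ∈ Finset.univ.filter (fun k => x k = 1), dstar (Y k) ^ 2 := by
        rw [Finset.sum_filter]
        apply Finset.sum_congr rfl
        intro k _
        rw [hvk k, hwk k, Real.dist_eq, sq_abs]
        rcases hx01 k with h0 | h1
        · have : ¬ (x k = 1) := by rw [h0]; norm_num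
          rw [if_neg this]
          simp [hyn, hzn, this]
        · rw [if_pos h1]
          simp only [hyn, hzn, if_pos h1]
          by_cases he : Even (i k)
          · rw [if_pos he, if_pos he, ← hi2 k]; ring
          · rw [if_neg he, if_neg he, ← hi2 k]
      calc (design p L s Y 0).einfsep ≤ edist v w :=
            Set.einfsep_le_edist_of_mem hvD hwD hne
        _ = _ := by rw [edistEq, hsum]
    · -- second infimum: pairs differing by 2 in one coordinate
      apply le_iInf
      rintro ⟨k₀, hk₀⟩
      obtain ⟨j, hj1, hj2⟩ := dplus_exists (Y k₀) (by rw [hY]; omega)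
      rw [hY] at hj1
      obtain ⟨x, hxL, hxk⟩ := hLp k₀ (j : ℤ)
      set yn : Fin p → ℕ :=
        fun m => if m = k₀ then j else (if Even (x m) then 0 else 1) with hyn
      set zn : Fin p → ℕ :=
        fun m => if m = k₀ then j + 2 else (if Even (x m) then 0 else 1) with hzn
      set yv : Fin p → ℤ := fun m => (yn m : ℤ) with hyv
      set zv : Fin p → ℤ := fun m => (zn m : ℤ) with hzv
      have hyL : yv ∈ L := by
        apply parityMem x _ hxL
        intro m
        simp only [hyv, hyn]
        by_cases hm : m = k₀
        · rw [if_pos hm, hm, hxk]; simp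
        · rw [if_neg hm]
          rcases Int.even_or_odd (x m) with he | ho
          · rw [if_pos (by exact_mod_cast he)]
            obtain ⟨r, hr⟩ := he; exact ⟨-r, by rw [hr]; push_cast; ring⟩
          · rw [if_neg (by simpa [Int.not_even_iff_odd] using ho)]
            obtain ⟨r, hr⟩ := ho; exact ⟨-r, by rw [hr]; push_cast; ring⟩
      have hzL : zv ∈ L := by
        apply parityMem yv _ hyL
        intro m
        simp only [hyv, hzv, hyn, hzn]
        by_cases hm : m = k₀
        · rw [if_pos hm, if_pos hm]; exact ⟨1, by push_cast; ring⟩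
        · rw [if_neg hm, if_neg hm]; simp
      have hynlt : ∀ m, yn m < s m := by
        intro m
        simp only [hyn]
        by_cases hm : m = k₀
        · subst hm; rw [if_pos rfl]; omega
        · rw [if_neg hm]; have := hs m; split_ifs <;> omega
      have hznlt : ∀ m, zn m < s m := by
        intro m
        simp only [hzn]
        by_cases hm : m = k₀
        · subst hm; rw [if_pos rfl]; omega
        · rw [if_neg hm]; have := hs m; split_ifs <;> omega
      have hyB : yv ∈ latticeBox p L s 0 := by
        refine ⟨by simpa using hyL, fun m => ⟨Int.natCast_nonneg _, ?_⟩⟩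
        have := hynlt m
        simp only [hyv]
        exact_mod_cast this
      have hzB : zv ∈ latticeBox p L s 0 := by
        refine ⟨by simpa using hzL, fun m => ⟨Int.natCast_nonneg _, ?_⟩⟩
        have := hznlt m
        simp only [hzv]
        exact_mod_cast this
      set v : EuclideanSpace ℝ (Fin p) := WithLp.toLp 2 (fun m => nthLevel (Y m) (yv m).toNat) with hv
      set w : EuclideanSpace ℝ (Fin p) := WithLp.toLp 2 (fun m => nthLevel (Y m) (zv m).toNat) with hw
      have hvD : v ∈ design p L s Y 0 := ⟨yv, hyB, fun m => rfl⟩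
      have hwD : w ∈ design p L s Y 0 := ⟨zv, hzB, fun m => rfl⟩
      have hvk : ∀ m, v m = nthLevel (Y m) (yn m) := by
        intro m; simp [hv, hyv, Int.toNat_natCast]
      have hwk : ∀ m, w m = nthLevel (Y m) (zn m) := by
        intro m; simp [hw, hzv, Int.toNat_natCast]
      have hjcard : j + 2 < (Y k₀).card := by rw [hY]; exact hj1
      have hlt : nthLevel (Y k₀) j < nthLevel (Y k₀) (j + 2) :=
        nthLevel_lt (Y k₀) (by omega) hjcard
      have hne : v ≠ w := by
        intro h
        have h2 := congrArg (· k₀) h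
        rw [hvk k₀, hwk k₀] at h2
        simp only [hyn, hzn, if_pos rfl] at h2
        exact absurd h2 hlt.ne
      have hsum : ∑ m, dist (v m) (w m) ^ 2 = dplus (Y k₀) ^ 2 := by
        rw [Finset.sum_eq_single_of_mem k₀ (Finset.mem_univ _)]
        · rw [hvk k₀, hwk k₀, Real.dist_eq, sq_abs]
          simp only [hyn, hzn, if_pos rfl]
          rw [← hj2]; ring
        · intro m _ hm
          rw [hvk m, hwk m]
          simp only [hyn, hzn, if_neg hm]
          simp
      calc (design p L s Y 0).einfsep ≤ edist v w :=
            Set.einfsep_le_edist_of_mem hvD hwD hne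
        _ = _ := by
            rw [edistEq, hsum, Real.sqrt_sq (dplus_nonneg _)]
  · -- lower bound
    apply Set.le_einfsep
    rintro v ⟨y, ⟨hyL, hybox⟩, hveq⟩ w ⟨z, ⟨hzL, hzbox⟩, hweq⟩ hne
    rw [sub_zero] at hyL hzL
    have hyc : ∀ k, ((y k).toNat : ℤ) = y k := fun k => Int.toNat_of_nonneg (hybox k).1
    have hzc : ∀ k, ((z k).toNat : ℤ) = z k := fun k => Int.toNat_of_nonneg (hzbox k).1
    have hylt : ∀ k, (y k).toNat < (Y k).card := by
      intro k; rw [hY]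
      have := (hybox k).2; have := hyc k; omega
    have hzlt : ∀ k, (z k).toNat < (Y k).card := by
      intro k; rw [hY]
      have := (hzbox k).2; have := hzc k; omega
    obtain ⟨k₁, hk₁⟩ : ∃ k, v k ≠ w k := by
      by_contra hc; push_neg at hc; exact hne (PiLp.ext hc)
    have hyz1 : y k₁ ≠ z k₁ := by
      intro h
      apply hk₁
      rw [hveq k₁, hweq k₁, h]
    have hxL : z - y ∈ L := sub_mem hzL hyL
    by_cases hbig : ∃ k, 2 ≤ |z k - y k|
    · -- case A: some coordinate differs by ≥ 2
      obtain ⟨k₀, hk0⟩ := hbig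
      rw [le_abs] at hk0
      have hslt : 2 < s k₀ := by
        have h1 := (hybox k₀).1; have h2 := (hybox k₀).2
        have h3 := (hzbox k₀).1; have h4 := (hzbox k₀).2
        omega
      have hdd : dplus (Y k₀) ≤ dist (v k₀) (w k₀) := by
        rw [hveq k₀, hweq k₀, Real.dist_eq]
        have hyk := hyc k₀; have hzk := hzc k₀
        rcases hk0 with h | h
        · -- y k₀ + 2 ≤ z k₀
          have hab : (y k₀).toNat + 2 ≤ (z k₀).toNat := by omega
          have h1 : (y k₀).toNat + 2 < (Y k₀).card := by
            have := hzlt k₀; omega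
          have h2 := dplus_le (Y k₀) h1
          have h3 := nthLevel_le (Y k₀) hab (hzlt k₀)
          have h0 := dplus_nonneg (Y k₀)
          rw [abs_of_nonpos (by linarith)]
          linarith
        · -- z k₀ + 2 ≤ y k₀
          have hab : (z k₀).toNat + 2 ≤ (y k₀).toNat := by omega
          have h1 : (z k₀).toNat + 2 < (Y k₀).card := by
            have := hylt k₀; omega
          have h2 := dplus_le (Y k₀) h1
          have h3 := nthLevel_le (Y k₀) hab (hylt k₀)
          have h0 := dplus_nonneg (Y k₀)
          rw [abs_of_nonneg (by linarith)]
          linarith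
      have hdist : dist (v k₀) (w k₀) ≤ Real.sqrt (∑ k, dist (v k) (w k) ^ 2) := by
        rw [show dist (v k₀) (w k₀) = Real.sqrt (dist (v k₀) (w k₀) ^ 2) from
          (Real.sqrt_sq dist_nonneg).symm]
        apply Real.sqrt_le_sqrt
        exact Finset.single_le_sum (f := fun k => dist (v k) (w k) ^ 2)
          (fun k _ => sq_nonneg _) (Finset.mem_univ k₀)
      calc min _ _ ≤ ⨅ k : {k : Fin p // 2 < s k}, ENNReal.ofReal (dplus (Y k.1)) :=
            min_le_right _ _
        _ ≤ ENNReal.ofReal (dplus (Y k₀)) :=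
            iInf_le (fun k : {k : Fin p // 2 < s k} => ENNReal.ofReal (dplus (Y k.1))) ⟨k₀, hslt⟩
        _ ≤ edist v w := by
            rw [edistEq]
            exact ENNReal.ofReal_le_ofReal (le_trans hdd hdist)
    · -- case B: all coordinates differ by ≤ 1
      push_neg at hbig
      have hsm : ∀ k, -2 < z k - y k ∧ z k - y k < 2 := by
        intro k
        have := hbig k
        rw [abs_lt] at this
        exact this
      set x' : Fin p → ℤ := fun k => (z k - y k) ^ 2 with hx'
      have h01 : ∀ k, x' k = 0 ∨ x' k = 1 := by
        intro k
        have h := hsm k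
        have : z k - y k = -1 ∨ z k - y k = 0 ∨ z k - y k = 1 := by omega
        rcases this with h | h | h <;> simp [hx', h]
      have hx'L : x' ∈ L := by
        apply parityMem (z - y) _ hxL
        intro k
        simp only [hx', Pi.sub_apply]
        rcases Int.even_or_odd (z k - y k) with ⟨m, hm⟩ | ⟨m, hm⟩
        · exact ⟨2 * m ^ 2 - m, by rw [hm]; ring⟩
        · exact ⟨2 * m ^ 2 + m, by rw [hm]; ring⟩
      have hx'ne : x' ≠ 0 := by
        intro h
        have h2 := congrFun h k₁
        simp only [hx', Pi.zero_apply] at h2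
        have h4 : z k₁ - y k₁ = 0 :=
          (pow_eq_zero_iff (by norm_num : (2:ℕ) ≠ 0)).mp h2
        exact hyz1 (by omega)
      have hterm : ∀ k, x' k = 1 → dstar (Y k) ≤ dist (v k) (w k) := by
        intro k hk
        have h := hsm k
        have hzy : z k - y k = -1 ∨ z k - y k = 1 := by
          rcases (by omega : z k - y k = -1 ∨ z k - y k = 0 ∨ z k - y k = 1) with h' | h' | h'
          · exact Or.inl h'
          · exfalso; rw [hx'] at hk; simp [h'] at hk
          · exact Or.inr h'
        rw [hveq k, hweq k, Real.dist_eq]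
        have hyk := hyc k; have hzk := hzc k
        rcases hzy with h' | h'
        · -- z k = y k - 1
          have hab : (z k).toNat + 1 = (y k).toNat := by omega
          have h1 : (z k).toNat + 1 < (Y k).card := by have := hylt k; omega
          have h2 := dstar_le (Y k) h1
          have h3 := nthLevel_lt (Y k) (Nat.lt_succ_self (z k).toNat) h1
          rw [← hab, abs_of_nonneg (by linarith)]
          linarith
        · -- z k = y k + 1
          have hab : (y k).toNat + 1 = (z k).toNat := by omega
          have h1 : (y k).toNat + 1 < (Y k).card := by have := hzlt k; omega
          have h2 := dstar_le (Y k) h1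
          have h3 := nthLevel_lt (Y k) (Nat.lt_succ_self (y k).toNat) h1
          rw [← hab, abs_of_nonpos (by linarith)]
          linarith
      have hsum : ∑ k ∈ Finset.univ.filter (fun k => x' k = 1), dstar (Y k) ^ 2
          ≤ ∑ k, dist (v k) (w k) ^ 2 := by
        calc ∑ k ∈ Finset.univ.filter (fun k => x' k = 1), dstar (Y k) ^ 2
            ≤ ∑ k ∈ Finset.univ.filter (fun k => x' k = 1), dist (v k) (w k) ^ 2 := by
              apply Finset.sum_le_sum
              intro k hk
              rw [Finset.mem_filter] at hk
              exact pow_le_pow_left₀ (dstar_nonneg _) (hterm k hk.2) 2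
          _ ≤ ∑ k, dist (v k) (w k) ^ 2 :=
              Finset.sum_le_sum_of_subset_of_nonneg (Finset.filter_subset _ _)
                (fun k _ _ => sq_nonneg _)
      calc min _ _ ≤ _ := min_le_left _ _
        _ ≤ ENNReal.ofReal
            (Real.sqrt (∑ k ∈ Finset.univ.filter (fun k => x' k = 1), dstar (Y k) ^ 2)) :=
            iInf_le (fun x : {x : Fin p → ℤ // x ∈ L ∧ (∀ k, x k = 0 ∨ x k = 1) ∧ x ≠ 0} =>
              ENNReal.ofReal
                (Real.sqrt (∑ k ∈ Finset.univ.filter (fun k => x.1 k = 1), dstar (Y k) ^ 2)))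
              ⟨x', hx'L, h01, hx'ne⟩
        _ ≤ edist v w := by
            rw [edistEq]
            exact ENNReal.ofReal_le_ofReal (Real.sqrt_le_sqrt hsum)
end

section
/- Let w > 0 and let s ≥ 3 be an odd integer. Set γ̄ = {(i−1)·w/(s−1) : i = 1,…,s}, the set of s equally spaced points in [0,w]. Then: (i) d*(γ̄) = w/(s−1) and d⁺(γ̄) = 2w/(s−1); (ii) for every finite set γ ⊆ [0,w] with exactly s elements, d*(γ) ≤ w/(s−1) and d⁺(γ) ≤ 2w/(s−1); and (iii) if in addition d*(γ) ≥ w/(s−1), then γ = γ̄. In particular, {γ̄} is a minimal sufficient set of level choices for ([0,w], s) when s is odd. -/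
open scoped BigOperators Classical

lemma sort_image_range (n : ℕ) (f : ℕ → ℝ) (hf : StrictMono f) :
    ((Finset.range n).image f).sort (· ≤ ·) = (List.range n).map f := by
  haveI : IsAntisymm ℝ (· ≤ ·) := ⟨fun _ _ => le_antisymm⟩
  refine (fun hp h1 h2 => List.Perm.eq_of_pairwise' (r := (· ≤ ·)) h1 h2 hp) ?_ ?_ ?_
  · rw [← Multiset.coe_eq_coe, Finset.sort_eq]
    rw [Finset.image_val, Finset.range_val]
    rw [Multiset.dedup_eq_self.2]
    · simp [Multiset.range]
    · rw [show Multiset.range n = ((List.range n : List ℕ) : Multiset ℕ) from rfl,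
        Multiset.map_coe, Multiset.coe_nodup]
      exact (List.nodup_range (n := n)).map hf.injective
  · exact Finset.pairwise_sort _ _
  · have : List.Pairwise (· < ·) ((List.range n).map f) :=
      List.Pairwise.map f (fun a b h => hf h) List.pairwise_lt_range
    exact this.imp le_of_lt

lemma nthLevel_image_range (n : ℕ) (f : ℕ → ℝ) (hf : StrictMono f) (i : ℕ) (hi : i < n) :
    nthLevel ((Finset.range n).image f) i = f i := by
  rw [nthLevel, sort_image_range n f hf]
  rw [List.getD_eq_getElem?_getD]
  simp [List.getElem?_map, List.getElem?_range hi]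

lemma nthLevel_mem (γ : Finset ℝ) (i : ℕ) (h : i < γ.card) : nthLevel γ i ∈ γ := by
  have hl : i < (γ.sort (· ≤ ·)).length := by rwa [Finset.length_sort]
  rw [nthLevel, List.getD_eq_getElem?_getD, List.getElem?_eq_getElem hl]
  exact (Finset.mem_sort _).1 (List.getElem_mem _)

/-- for odd `s`, the equally spaced levels `γ̄` maximize both `d*` and `d⁺`
among size-`s` subsets of `[0,w]`, and are the unique admissible choice. -/
theorem stmt_6 (w : ℝ) (hw : 0 < w) (s : ℕ) (hs : 3 ≤ s) (hodd : Odd s) :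
    dstar ((Finset.range s).image (fun i => (i : ℝ) * w / ((s : ℝ) - 1))) = w / ((s : ℝ) - 1) ∧
    dplus ((Finset.range s).image (fun i => (i : ℝ) * w / ((s : ℝ) - 1)))
      = 2 * w / ((s : ℝ) - 1) ∧
    (∀ γ : Finset ℝ, ↑γ ⊆ Set.Icc (0 : ℝ) w → γ.card = s →
      dstar γ ≤ w / ((s : ℝ) - 1) ∧
      dplus γ ≤ 2 * w / ((s : ℝ) - 1) ∧
      (w / ((s : ℝ) - 1) ≤ dstar γ →
        γ = (Finset.range s).image (fun i => (i : ℝ) * w / ((s : ℝ) - 1)))) := by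
  have hs1 : (1:ℝ) < (s:ℝ) := by
    have : (3:ℝ) ≤ (s:ℝ) := by exact_mod_cast hs
    linarith
  have hsp : (0:ℝ) < (s:ℝ) - 1 := by linarith
  set c := w / ((s:ℝ) - 1) with hc
  have hcpos : 0 < c := div_pos hw hsp
  set f : ℕ → ℝ := fun i => (i : ℝ) * w / ((s : ℝ) - 1) with hf
  have hfc : ∀ i : ℕ, f i = (i:ℝ) * c := fun i => by rw [hf, hc]; ring
  have hfmono : StrictMono f := by
    intro a b hab
    rw [hfc, hfc]
    exact mul_lt_mul_of_pos_right (by exact_mod_cast hab) hcpos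
  set γb := (Finset.range s).image f with hγb
  have hcardb : γb.card = s := by
    rw [hγb, Finset.card_image_of_injective _ hfmono.injective, Finset.card_range]
  have hnb : ∀ i : ℕ, i < s → nthLevel γb i = (i:ℝ) * c := by
    intro i hi
    rw [hγb, nthLevel_image_range s f hfmono i hi, hfc]
  have hsetrw : ((Finset.range s).image (fun i => (i : ℝ) * w / ((s : ℝ) - 1))) = γb := by
    rw [hγb, hf]; ext x; simp
  rw [hsetrw]
  have hcast : ((s - 1 : ℕ) : ℝ) = (s:ℝ) - 1 := by
    have : 1 ≤ s := by omega
    push_cast [this]; ring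
  -- part 1
  have part1 : dstar γb = c := by
    have hne : Nonempty (Fin (γb.card - 1)) := by rw [hcardb]; exact ⟨⟨0, by omega⟩⟩
    rw [dstar]
    rw [iInf_congr (g := fun _ => c) (fun i : Fin (γb.card - 1) => by
      have hi : i.1 < s - 1 := by have := i.2; omega
      rw [hnb (i.1+1) (by omega), hnb i.1 (by omega)]
      push_cast; ring)]
    exact ciInf_const
  -- part 2
  have part2 : dplus γb = 2 * c := by
    have hne : Nonempty (Fin (γb.card - 2)) := by rw [hcardb]; exact ⟨⟨0, by omega⟩⟩
    rw [dplus]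
    rw [iInf_congr (g := fun _ => 2 * c) (fun i : Fin (γb.card - 2) => by
      have hi : i.1 < s - 2 := by have := i.2; omega
      rw [hnb (i.1+2) (by omega), hnb i.1 (by omega)]
      push_cast; ring)]
    exact ciInf_const
  refine ⟨part1, by rw [part2, hc]; ring, ?_⟩
  intro γ hsub hcard
  set g : ℕ → ℝ := fun i => nthLevel γ i with hg
  have hmem : ∀ i, i < s → g i ∈ Set.Icc (0:ℝ) w := fun i hi =>
    hsub (Finset.mem_coe.2 (nthLevel_mem γ i (by omega)))
  have hg0 : 0 ≤ g 0 := (hmem 0 (by omega)).1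
  have hgtop : g (s-1) ≤ w := (hmem (s-1) (by omega)).2
  -- dstar γ ≤ each gap
  have hdle : ∀ i, i < s - 1 → dstar γ ≤ g (i+1) - g i := by
    intro i hi
    exact ciInf_le (Finite.bddBelow_range _) (⟨i, by omega⟩ : Fin (γ.card - 1))
  have htel : ∑ i ∈ Finset.range (s-1), (g (i+1) - g i) = g (s-1) - g 0 :=
    Finset.sum_range_sub g (s-1)
  have hsum_ge : ((s-1:ℕ):ℝ) * dstar γ ≤ ∑ i ∈ Finset.range (s-1), (g (i+1) - g i) := by
    have := Finset.card_nsmul_le_sum (Finset.range (s-1))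
      (fun i => g (i+1) - g i) (dstar γ)
      (fun i hi => hdle i (Finset.mem_range.1 hi))
    rwa [Finset.card_range, nsmul_eq_mul] at this
  have hdsle : dstar γ ≤ c := by
    rw [hc, le_div_iff₀ hsp]
    have : ((s-1:ℕ):ℝ) * dstar γ ≤ w := by
      calc ((s-1:ℕ):ℝ) * dstar γ ≤ g (s-1) - g 0 := by rw [← htel]; exact hsum_ge
        _ ≤ w := by linarith
    rw [hcast] at this; linarith
  -- dplus
  obtain ⟨m, hm⟩ := hodd
  have hm1 : 1 ≤ m := by omega
  have hdple : ∀ j, j < m → dplus γ ≤ g (2*j+2) - g (2*j) := by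
    intro j hj
    exact ciInf_le (Finite.bddBelow_range _) (⟨2*j, by omega⟩ : Fin (γ.card - 2))
  have htel2 : ∑ j ∈ Finset.range m, (g (2*j+2) - g (2*j)) = g (2*m) - g 0 := by
    rw [Finset.sum_congr rfl (fun j _ => by rw [show 2*j+2 = 2*(j+1) by ring])]
    exact Finset.sum_range_sub (fun j => g (2*j)) m
  have hsum2 : (m:ℝ) * dplus γ ≤ ∑ j ∈ Finset.range m, (g (2*j+2) - g (2*j)) := by
    have := Finset.card_nsmul_le_sum (Finset.range m)
      (fun j => g (2*j+2) - g (2*j)) (dplus γ)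
      (fun j hj => hdple j (Finset.mem_range.1 hj))
    rwa [Finset.card_range, nsmul_eq_mul] at this
  have h2m : 2*m = s - 1 := by omega
  have hmw : (m:ℝ) * dplus γ ≤ w := by
    calc (m:ℝ) * dplus γ ≤ g (2*m) - g 0 := by rw [← htel2]; exact hsum2
      _ ≤ w := by rw [h2m]; linarith
  have hmr : (s:ℝ) - 1 = 2 * (m:ℝ) := by
    have : (s:ℝ) = 2*(m:ℝ)+1 := by exact_mod_cast congrArg (Nat.cast : ℕ → ℝ) hm
    linarith
  have hdplle : dplus γ ≤ 2 * w / ((s:ℝ) - 1) := by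
    rw [hmr, le_div_iff₀ (by positivity : (0:ℝ) < 2*(m:ℝ))]
    have hm0 : (0:ℝ) < (m:ℝ) := by exact_mod_cast hm1
    nlinarith
  refine ⟨hdsle, hdplle, ?_⟩
  -- uniqueness
  intro hd
  have hgap_ge : ∀ i, i < s - 1 → c ≤ g (i+1) - g i := fun i hi =>
    le_trans hd (hdle i hi)
  have hw_eq : ((s:ℝ) - 1) * c = w := by rw [hc]; field_simp
  have hsum_le : ∑ i ∈ Finset.range (s-1), (g (i+1) - g i) ≤ ((s:ℝ)-1) * c := by
    rw [htel, hw_eq]; linarith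
  have hgap_eq : ∀ i, i < s - 1 → g (i+1) - g i = c := by
    intro i hi
    by_contra hne
    have hlt : c < g (i+1) - g i := lt_of_le_of_ne (hgap_ge i hi) (Ne.symm hne)
    have : ∑ _i ∈ Finset.range (s-1), c < ∑ i ∈ Finset.range (s-1), (g (i+1) - g i) :=
      Finset.sum_lt_sum (fun j hj => hgap_ge j (Finset.mem_range.1 hj))
        ⟨i, Finset.mem_range.2 hi, hlt⟩
    rw [Finset.sum_const, Finset.card_range, nsmul_eq_mul, hcast] at this
    linarith
  have hsum_eq : g (s-1) - g 0 = w := by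
    have h1 : ((s:ℝ)-1) * c ≤ ∑ i ∈ Finset.range (s-1), (g (i+1) - g i) := by
      have := Finset.card_nsmul_le_sum (Finset.range (s-1))
        (fun i => g (i+1) - g i) c (fun i hi => hgap_ge i (Finset.mem_range.1 hi))
      rwa [Finset.card_range, nsmul_eq_mul, hcast] at this
    rw [htel] at h1 hsum_le
    linarith [hw_eq]
  have hg0_eq : g 0 = 0 := by linarith
  have key : ∀ i, i < s → g i = (i:ℝ) * c := by
    intro i
    induction i with
    | zero => intro _; simpa using hg0_eq
    | succ n ih =>
      intro hn
      have h1 := hgap_eq n (by omega)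
      have h2 := ih (by omega)
      push_cast
      linarith
  have hsubset : γb ⊆ γ := by
    intro x hx
    rw [hγb, Finset.mem_image] at hx
    obtain ⟨i, hi, rfl⟩ := hx
    rw [hfc, ← key i (Finset.mem_range.1 hi)]
    exact nthLevel_mem γ i (by rw [hcard]; exact Finset.mem_range.1 hi)
  exact (Finset.eq_of_subset_of_card_le hsubset (by rw [hcard, hcardb])).symm
end

section
/- Let w > 0, let s ≥ 4 be an even integer, and let 0 < v₁ ≤ w/(s−1). Set v₂ = (2w − s·v₁)/(s−2) and γ̃_{v₁} = {⌊i/2⌋·v₁ + (⌈i/2⌉ − 1)·v₂ : i = 1,…,s}. If γ ⊆ [0,w] is a finite set with exactly s elements satisfying d*(γ) ≥ v₁ and d⁺(γ) ≥ (2w − 2v₁)/(s−2), then γ = γ̃_{v₁}; that is, γ̃_{v₁} is the unique size-s subset of [0,w] simultaneously achieving d* ≥ v₁ and d⁺ ≥ v₁ + v₂. -/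
open scoped BigOperators Classical

/-- for even `s ≥ 4` and `0 < v₁ ≤ w/(s−1)`, `γ̃_{v₁}` is the unique size-`s`
subset of `[0,w]` with `d* ≥ v₁` and `d⁺ ≥ (2w − 2v₁)/(s−2)`. -/
theorem stmt_9 (w : ℝ) (hw : 0 < w) (s : ℕ) (hs : 4 ≤ s) (heven : Even s)
    (v1 : ℝ) (hv1 : 0 < v1) (hv1' : v1 ≤ w / ((s : ℝ) - 1))
    (γ : Finset ℝ) (hγ : ↑γ ⊆ Set.Icc (0 : ℝ) w) (hcard : γ.card = s)
    (hds : v1 ≤ dstar γ) (hdp : (2 * w - 2 * v1) / ((s : ℝ) - 2) ≤ dplus γ) :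
    γ = (Finset.range s).image
      (fun i => (((i + 1) / 2 : ℕ) : ℝ) * v1 +
        ((((i + 2) / 2 : ℕ) : ℝ) - 1) * ((2 * w - (s : ℝ) * v1) / ((s : ℝ) - 2))) := by
  classical
  obtain ⟨t, ht⟩ := heven
  obtain ⟨m, hm, hm1⟩ : ∃ m, s = 2 * m + 2 ∧ 1 ≤ m := ⟨t - 1, by omega, by omega⟩
  set v2 : ℝ := (2 * w - (s : ℝ) * v1) / ((s : ℝ) - 2) with hv2def
  set L : ℕ → ℝ := nthLevel γ with hLdef
  have hsR : (s : ℝ) = 2 * (m : ℝ) + 2 := by rw [hm]; push_cast; ring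
  have hmR : (1 : ℝ) ≤ (m : ℝ) := by exact_mod_cast hm1
  have hs2ne : (s : ℝ) - 2 ≠ 0 := by rw [hsR]; nlinarith
  -- the target gap equals v1 + v2
  have hgapeq : (2 * w - 2 * v1) / ((s : ℝ) - 2) = v1 + v2 := by
    rw [hv2def]; field_simp; ring
  have hlen : (γ.sort (· ≤ ·)).length = s := by
    rw [Finset.length_sort, hcard]
  -- membership
  have hmem : ∀ i, i < s → L i ∈ γ := by
    intro i hi
    have hi' : i < (γ.sort (· ≤ ·)).length := by omega
    have : L i = (γ.sort (· ≤ ·))[i] := List.getD_eq_getElem _ _ hi'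
    rw [this]
    exact (Finset.mem_sort _).1 (List.getElem_mem hi')
  have hbound : ∀ i, i < s → 0 ≤ L i ∧ L i ≤ w := by
    intro i hi
    have := hγ (hmem i hi)
    exact ⟨this.1, this.2⟩
  -- strict monotonicity
  have hmono : ∀ i j, i < j → j < s → L i < L j := by
    intro i j hij hj
    have hj' : j < (γ.sort (· ≤ ·)).length := by omega
    have hi' : i < (γ.sort (· ≤ ·)).length := by omega
    have h1 : L i = (γ.sort (· ≤ ·))[i] := List.getD_eq_getElem _ _ hi'
    have h2 : L j = (γ.sort (· ≤ ·))[j] := List.getD_eq_getElem _ _ hj'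
    rw [h1, h2]
    exact List.Pairwise.rel_get_of_lt (Finset.sortedLT_sort γ).pairwise
      (a := ⟨i, hi'⟩) (b := ⟨j, hj'⟩) (by exact hij)
  -- gap bounds
  have hg1 : ∀ i, i < s - 1 → v1 ≤ L (i + 1) - L i := by
    intro i hi
    refine le_trans hds ?_
    exact ciInf_le (Set.Finite.bddBelow (Set.finite_range _))
      (⟨i, by omega⟩ : Fin (γ.card - 1))
  have hg2 : ∀ i, i < s - 2 → v1 + v2 ≤ L (i + 2) - L i := by
    intro i hi
    rw [← hgapeq]
    refine le_trans hdp ?_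
    exact ciInf_le (Set.Finite.bddBelow (Set.finite_range _))
      (⟨i, by omega⟩ : Fin (γ.card - 2))
  -- telescoping chains
  have hchain : ∀ k i, i + 2 * k ≤ s - 1 → (k : ℝ) * (v1 + v2) ≤ L (i + 2 * k) - L i := by
    intro k
    induction k with
    | zero => intro i _; simp
    | succ n ih =>
      intro i hi
      have h1 : i + 2 * n < s - 2 := by omega
      have h2 := hg2 (i + 2 * n) h1
      have h3 := ih i (by omega)
      have heq : i + 2 * (n + 1) = (i + 2 * n) + 2 := by ring
      rw [heq]
      push_cast
      linarith
  -- key equalities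
  have hA := hchain m 1 (by omega)
  have hB := hg1 0 (by omega)
  have hA' : (m : ℝ) * (v1 + v2) ≤ L (2 * m + 1) - L 1 := by
    have : 1 + 2 * m = 2 * m + 1 := by omega
    rwa [this] at hA
  have hC : L (2 * m + 1) ≤ w := (hbound (2 * m + 1) (by omega)).2
  have hL00 : 0 ≤ L 0 := (hbound 0 (by omega)).1
  have hweq : (m : ℝ) * (v1 + v2) + v1 = w := by
    rw [hv2def, hsR]
    have hm0 : (m : ℝ) ≠ 0 := by linarith
    rw [show (2 * (m : ℝ) + 2 - 2) = 2 * m by ring]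
    field_simp
    ring
  have hL0 : L 0 = 0 := by linarith
  have hL1 : L 1 = v1 := by linarith
  have hLtop : L (2 * m + 1) = w := by linarith
  -- values at even indices
  have hLev : ∀ k, k ≤ m → L (2 * k) = (k : ℝ) * (v1 + v2) := by
    intro k hk
    have hlow := hchain k 0 (by omega)
    have hup := hchain (m - k) (2 * k) (by omega)
    have heq2 : 2 * k + 2 * (m - k) = 2 * m := by omega
    rw [heq2] at hup
    have hcast : ((m - k : ℕ) : ℝ) = (m : ℝ) - (k : ℝ) := by
      push_cast [Nat.cast_sub hk]; ring
    rw [hcast] at hup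
    have htopgap := hg1 (2 * m) (by omega)
    have h2m1 : 2 * m + 1 = (2 * m) + 1 := rfl
    rw [← h2m1] at htopgap
    have hlow' : (k : ℝ) * (v1 + v2) ≤ L (2 * k) := by
      have : (0 : ℕ) + 2 * k = 2 * k := by omega
      rw [this] at hlow; linarith
    linarith
  -- values at odd indices
  have hLodd : ∀ k, k ≤ m → L (2 * k + 1) = v1 + (k : ℝ) * (v1 + v2) := by
    intro k hk
    have hlow := hchain k 1 (by omega)
    have hup := hchain (m - k) (2 * k + 1) (by omega)
    have heq2 : 2 * k + 1 + 2 * (m - k) = 2 * m + 1 := by omega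
    rw [heq2] at hup
    have hcast : ((m - k : ℕ) : ℝ) = (m : ℝ) - (k : ℝ) := by
      push_cast [Nat.cast_sub hk]; ring
    rw [hcast] at hup
    have h12k : 1 + 2 * k = 2 * k + 1 := by omega
    rw [h12k] at hlow
    linarith
  -- general formula
  have hLval : ∀ i, i < s → L i = (((i + 1) / 2 : ℕ) : ℝ) * v1 + ((i / 2 : ℕ) : ℝ) * v2 := by
    intro i hi
    rcases Nat.even_or_odd i with ⟨k, hk⟩ | ⟨k, hk⟩
    · have hk2 : i = 2 * k := by omega
      subst hk2
      have h1 : (2 * k + 1) / 2 = k := by omega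
      have h2 : (2 * k) / 2 = k := by omega
      rw [h1, h2, hLev k (by omega)]
      ring
    · have hk2 : i = 2 * k + 1 := by omega
      subst hk2
      have h1 : (2 * k + 1 + 1) / 2 = k + 1 := by omega
      have h2 : (2 * k + 1) / 2 = k := by omega
      rw [h1, h2, hLodd k (by omega)]
      push_cast
      ring
  -- the target function agrees with L
  set f : ℕ → ℝ := fun i => (((i + 1) / 2 : ℕ) : ℝ) * v1 +
      ((((i + 2) / 2 : ℕ) : ℝ) - 1) * v2 with hfdef
  have hfL : ∀ i, i < s → f i = L i := by
    intro i hi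
    have h1 : (i + 2) / 2 = i / 2 + 1 := by omega
    rw [hfdef, hLval i hi]
    simp only [h1]
    push_cast
    ring
  -- conclude
  symm
  apply Finset.eq_of_subset_of_card_le
  · intro x hx
    obtain ⟨i, hi, hfi⟩ := Finset.mem_image.1 hx
    rw [Finset.mem_range] at hi
    have : x = L i := by rw [← hfi]; exact hfL i hi
    rw [this]
    exact hmem i hi
  · rw [Finset.card_image_of_injOn, Finset.card_range, hcard]
    intro i hi j hj hij
    rw [Finset.mem_coe, Finset.mem_range] at hi hj
    by_contra hne
    rcases lt_or_gt_of_ne hne with h | h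
    · have := hmono i j h hj
      rw [← hfL i hi, ← hfL j hj] at this
      exact absurd hij (ne_of_lt this)
    · have := hmono j i h hi
      rw [← hfL i hi, ← hfL j hj] at this
      exact absurd hij.symm (ne_of_lt this)
end

section
/- Let w > 0, let s ≥ 4 be an even integer, and let 0 < v₁ ≤ w/(s−1). Set v₂ = (2w − s·v₁)/(s−2) and γ̃_{v₁} = {⌊i/2⌋·v₁ + (⌈i/2⌉ − 1)·v₂ : i = 1,…,s}. Then γ̃_{v₁} is a subset of [0,w] with exactly s elements, its largest element equals w, its consecutive gaps alternate between v₁ and v₂ with v₁ ≤ v₂, and d*(γ̃_{v₁}) = v₁ and d⁺(γ̃_{v₁}) = v₁ + v₂ = (2w − 2v₁)/(s−2). -/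
open scoped BigOperators Classical

/-- properties of `γ̃_{v₁}` for even `s ≥ 4` and `0 < v₁ ≤ w/(s−1)`:
it is a size-`s` subset of `[0,w]` with largest element `w`, consecutive gaps alternating
between `v₁` and `v₂` with `v₁ ≤ v₂`, `d*(γ̃) = v₁`, and `d⁺(γ̃) = v₁ + v₂ = (2w−2v₁)/(s−2)`. -/
theorem stmt_11 (w : ℝ) (hw : 0 < w) (s : ℕ) (hs : 4 ≤ s) (heven : Even s)
    (v1 : ℝ) (hv1 : 0 < v1) (hv1' : v1 ≤ w / ((s : ℝ) - 1))
    (v2 : ℝ) (hv2 : v2 = (2 * w - (s : ℝ) * v1) / ((s : ℝ) - 2))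
    (γ : Finset ℝ)
    (hγdef : γ = (Finset.range s).image
      (fun i => (((i + 1) / 2 : ℕ) : ℝ) * v1 + ((((i + 2) / 2 : ℕ) : ℝ) - 1) * v2)) :
    ↑γ ⊆ Set.Icc (0 : ℝ) w ∧ γ.card = s ∧
    (w ∈ γ ∧ ∀ y ∈ γ, y ≤ w) ∧
    v1 ≤ v2 ∧
    (∀ i : ℕ, i + 1 < s → nthLevel γ (i + 1) - nthLevel γ i = if Even i then v1 else v2) ∧
    dstar γ = v1 ∧
    dplus γ = v1 + v2 ∧ v1 + v2 = (2 * w - 2 * v1) / ((s : ℝ) - 2) := by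
  set f : ℕ → ℝ :=
    fun i => (((i + 1) / 2 : ℕ) : ℝ) * v1 + ((((i + 2) / 2 : ℕ) : ℝ) - 1) * v2 with hf
  have hs1 : (0 : ℝ) < (s : ℝ) - 1 := by
    have : (4 : ℝ) ≤ (s : ℝ) := by exact_mod_cast hs
    linarith
  have hs2 : (0 : ℝ) < (s : ℝ) - 2 := by
    have : (4 : ℝ) ≤ (s : ℝ) := by exact_mod_cast hs
    linarith
  have hwv : v1 * ((s : ℝ) - 1) ≤ w := (le_div_iff₀ hs1).mp hv1'
  have hv12 : v1 ≤ v2 := by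
    rw [hv2, le_div_iff₀ hs2]; nlinarith
  have hv2pos : 0 < v2 := lt_of_lt_of_le hv1 hv12
  -- simplified form of f
  have hfs : ∀ i : ℕ, f i = (((i + 1) / 2 : ℕ) : ℝ) * v1 + ((i / 2 : ℕ) : ℝ) * v2 := by
    intro i
    have h2 : (i + 2) / 2 = i / 2 + 1 := by omega
    simp only [hf, h2]
    push_cast
    ring
  -- gaps
  have hgap : ∀ i : ℕ, f (i + 1) - f i = if Even i then v1 else v2 := by
    intro i
    rcases Nat.even_or_odd i with he | ho
    · obtain ⟨k, hk⟩ := he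
      have h1 : (i + 1 + 1) / 2 = k + 1 := by omega
      have h2 : (i + 1) / 2 = k := by omega
      have h3 : i / 2 = k := by omega
      rw [hfs, hfs, h1, h2, h3, if_pos (by exact ⟨k, hk⟩)]
      push_cast
      ring
    · obtain ⟨k, hk⟩ := ho
      have h1 : (i + 1 + 1) / 2 = k + 1 := by omega
      have h2 : (i + 1) / 2 = k + 1 := by omega
      have h3 : i / 2 = k := by omega
      rw [hfs, hfs, h1, h2, h3, if_neg (by simp [hk, Nat.odd_iff])]
      push_cast; ring
  have hmono : StrictMono f := by
    apply strictMono_nat_of_lt_succ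
    intro n
    have := hgap n
    have hpos : 0 < f (n + 1) - f n := by
      rw [this]; split <;> [exact hv1; exact hv2pos]
    linarith
  -- sorted list
  have hnodup : ((List.range s).map f).Nodup :=
    (List.nodup_range).map hmono.injective
  have hsorted : ((List.range s).map f).Pairwise (· ≤ ·) := by
    rw [List.pairwise_map]
    exact (List.pairwise_lt_range (n := s)).imp (fun h => (hmono h).le)
  have hγl : γ = ((List.range s).map f).toFinset := by
    rw [hγdef]; ext x; simp [← hf, eq_comm]
  have hsort : γ.sort (· ≤ ·) = (List.range s).map f := by
    rw [hγl, List.toFinset_sort _ hnodup]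
    exact hsorted
  have hcard : γ.card = s := by
    rw [hγl, List.toFinset_card_of_nodup hnodup]
    simp
  have hnth : ∀ i < s, nthLevel γ i = f i := by
    intro i hi
    rw [nthLevel, hsort, List.getD_eq_getElem?_getD]
    simp [List.getElem?_map, List.getElem?_range hi]
  -- f 0 = 0 and f (s-1) = w
  have hf0 : f 0 = 0 := by rw [hfs]; norm_num
  have hfs1 : f (s - 1) = w := by
    obtain ⟨t, ht⟩ := heven
    have ht2 : t ≥ 2 := by omega
    have h1 : (s - 1 + 1) / 2 = t := by omega
    have h2 : (s - 1) / 2 = t - 1 := by omega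
    rw [hfs, h1, h2, hv2]
    have hst : (s : ℝ) = 2 * t := by rw [ht]; push_cast; ring
    have htc : ((t - 1 : ℕ) : ℝ) = (t : ℝ) - 1 := by
      have : (1 : ℕ) ≤ t := by omega
      push_cast [this]; ring
    rw [htc, hst]
    have h2t2 : (2 * (t : ℝ) - 2) ≠ 0 := by
      rw [hst] at hs2; linarith
    have ht1 : ((t : ℝ) - 1) ≠ 0 := by
      rw [hst] at hs2; linarith
    field_simp
    ring
  have hmem : ∀ y ∈ γ, ∃ i < s, y = f i := by
    intro y hy
    rw [hγdef, Finset.mem_image] at hy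
    obtain ⟨i, hi, hyi⟩ := hy
    exact ⟨i, Finset.mem_range.mp hi, hyi.symm⟩
  have hle : ∀ i < s, f i ≤ w := by
    intro i hi
    rw [← hfs1]
    exact hmono.monotone (by omega)
  have hge : ∀ i : ℕ, 0 ≤ f i := by
    intro i
    rw [← hf0]
    exact hmono.monotone (Nat.zero_le i)
  refine ⟨?_, hcard, ⟨?_, ?_⟩, hv12, ?_, ?_, ?_, ?_⟩
  · intro y hy
    obtain ⟨i, hi, rfl⟩ := hmem y hy
    exact ⟨hge i, hle i hi⟩
  · rw [hγdef, Finset.mem_image]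
    exact ⟨s - 1, Finset.mem_range.mpr (by omega), hfs1⟩
  · intro y hy
    obtain ⟨i, hi, rfl⟩ := hmem y hy
    exact hle i hi
  · intro i hi
    rw [hnth _ hi, hnth _ (by omega), hgap]
  · -- dstar
    rw [dstar, hcard]
    have hne : Nonempty (Fin (s - 1)) := ⟨⟨0, by omega⟩⟩
    apply le_antisymm
    · have hbdd : BddBelow (Set.range
          (fun i : Fin (s - 1) => nthLevel γ (i.1 + 1) - nthLevel γ i.1)) :=
        (Set.finite_range _).bddBelow
      have := ciInf_le hbdd (⟨0, by omega⟩ : Fin (s - 1))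
      have hf1 : f 1 = v1 := by rw [hfs]; norm_num
      simpa [hnth 0 (by omega), hnth 1 (by omega), hf0, hf1] using this
    · apply le_ciInf
      intro i
      have hi : i.1 + 1 < s := by omega
      rw [hnth _ hi, hnth _ (by omega), hgap]
      split <;> [exact le_refl v1; exact hv12]
  · -- dplus
    rw [dplus, hcard]
    have hne : Nonempty (Fin (s - 2)) := ⟨⟨0, by omega⟩⟩
    have hval : ∀ i : Fin (s - 2), nthLevel γ (i.1 + 2) - nthLevel γ i.1 = v1 + v2 := by
      intro i
      have hi : i.1 + 2 < s := by omega
      have g1 := hgap i.1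
      have g2 := hgap (i.1 + 1)
      rw [hnth _ hi, hnth _ (by omega)]
      rcases Nat.even_or_odd i.1 with he | ho
      · rw [if_pos he] at g1
        rw [if_neg (by simp [Nat.even_add_one, he])] at g2
        linarith
      · rw [if_neg (Nat.not_even_iff_odd.mpr ho)] at g1
        rw [if_pos (by simp [Nat.even_add_one, Nat.not_even_iff_odd.mpr ho])] at g2
        linarith
    calc (⨅ i : Fin (s - 2), (nthLevel γ (i.1 + 2) - nthLevel γ i.1))
        = ⨅ _ : Fin (s - 2), (v1 + v2) := by exact iInf_congr hval
      _ = v1 + v2 := ciInf_const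
  · rw [hv2]
    field_simp
    ring
end

section
/- Let p ≥ 1, let 𝓛 be a standard interleaved lattice in dimension p, let s = (s_1,…,s_p) with each s_k an integer ≥ 2, and for each k let 𝒴_k ⊂ ℝ be a finite set with exactly s_k elements. Then for every coordinate k with s_k ≥ 3, the separation distance satisfies ρ(D(𝓛,s,𝒴,0_p)) ≤ d⁺(𝒴_k). -/
open scoped BigOperators Classical

lemma nthLevel_lt_nthLevel {γ : Finset ℝ} {i j : ℕ} (hij : i < j) (hj : j < γ.card) :
    nthLevel γ i < nthLevel γ j := by
  have hlen : (γ.sort (· ≤ ·)).length = γ.card := Finset.length_sort _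
  have hj' : j < (γ.sort (· ≤ ·)).length := hlen ▸ hj
  have hi' : i < (γ.sort (· ≤ ·)).length := lt_trans hij hj'
  have hs := γ.sortedLT_sort
  have := hs.strictMono_get (a := ⟨i, hi'⟩) (b := ⟨j, hj'⟩) hij
  rw [nthLevel, nthLevel, List.getD_eq_getElem _ _ hi', List.getD_eq_getElem _ _ hj']
  simpa using this


/-- for every coordinate `k` with `s_k ≥ 3`,
`ρ(D(𝓛,s,𝒴,0)) ≤ d⁺(𝒴_k)`. -/
theorem stmt_15 (p : ℕ) (hp : 1 ≤ p) (L : AddSubgroup (Fin p → ℤ)) (hL : IsStdIL p L)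
    (s : Fin p → ℕ) (hs : ∀ k, 2 ≤ s k)
    (Y : Fin p → Finset ℝ) (hY : ∀ k, (Y k).card = s k)
    (k : Fin p) (hk : 3 ≤ s k) :
    (design p L s Y 0).einfsep ≤ ENNReal.ofReal (dplus (Y k)) := by
  have hcard : (Y k).card = s k := hY k
  have hne : Nonempty (Fin ((Y k).card - 2)) := by
    refine ⟨⟨0, ?_⟩⟩; omega
  -- minimizing index
  obtain ⟨i0, hi0⟩ := Finite.exists_min
    (fun i : Fin ((Y k).card - 2) => nthLevel (Y k) (i.1 + 2) - nthLevel (Y k) i.1)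
  have hdplus : dplus (Y k) = nthLevel (Y k) (i0.1 + 2) - nthLevel (Y k) i0.1 := by
    refine le_antisymm (ciInf_le (Finite.bddBelow_range _) i0) (le_ciInf hi0)
  have hi0lt : i0.1 + 2 < s k := by have := i0.2; omega
  -- construct lattice point
  obtain ⟨x, hxL, hxk⟩ := hL.2 k (i0.1 : ℤ)
  set y : Fin p → ℤ := fun j => if j = k then (i0.1 : ℤ) else x j % 2 with hy
  have hyL : y ∈ L := by
    have h1 : y - x ∈ L := by
      apply hL.1
      intro j
      by_cases hj : j = k
      · subst hj; simp [hy, hxk]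
      · refine ⟨-(x j / 2), ?_⟩
        simp only [hy, Pi.sub_apply, if_neg hj]
        have := Int.emod_def (x j) 2
        linarith
    have := L.add_mem h1 hxL
    simpa using this
  set e : Fin p → ℤ := fun j => if j = k then 2 else 0 with he
  have heL : e ∈ L := hL.1 e (fun j => by by_cases hj : j = k <;> simp [he, hj])
  have hrange : ∀ j, 0 ≤ y j ∧ y j < (s j : ℤ) := by
    intro j
    by_cases hj : j = k
    · subst hj; simp only [hy, if_pos rfl, if_true, eq_self_iff_true]
      exact ⟨Int.ofNat_nonneg _, by exact_mod_cast by omega⟩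
    · simp only [hy, if_neg hj]
      have h1 : 0 ≤ x j % 2 := Int.emod_nonneg _ (by norm_num)
      have h2 : x j % 2 < 2 := Int.emod_lt_of_pos _ (by norm_num)
      have := hs j
      constructor
      · exact h1
      · omega
  have hybox : y ∈ latticeBox p L s 0 := by
    refine ⟨by simpa using hyL, hrange⟩
  have hy'box : y + e ∈ latticeBox p L s 0 := by
    refine ⟨by simpa using L.add_mem hyL heL, ?_⟩
    intro j
    by_cases hj : j = k
    · subst hj
      simp only [Pi.add_apply, hy, he, if_pos rfl, if_true, eq_self_iff_true]
      constructor
      · positivity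
      · exact_mod_cast by omega
    · simp only [Pi.add_apply, he, if_neg hj, add_zero]
      exact hrange j
  -- the two design points
  set v : EuclideanSpace ℝ (Fin p) := WithLp.toLp 2 (fun j => nthLevel (Y j) (y j).toNat) with hv
  set w : EuclideanSpace ℝ (Fin p) := WithLp.toLp 2 (fun j => nthLevel (Y j) ((y + e) j).toNat) with hw
  have hvD : v ∈ design p L s Y 0 := ⟨y, hybox, fun j => rfl⟩
  have hwD : w ∈ design p L s Y 0 := ⟨y + e, hy'box, fun j => rfl⟩
  have hyk : (y k).toNat = i0.1 := by simp [hy]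
  have hy'k : ((y + e) k).toNat = i0.1 + 2 := by
    simp only [Pi.add_apply, hy, he, if_pos rfl, if_true, eq_self_iff_true]
    omega
  have hlt : nthLevel (Y k) i0.1 < nthLevel (Y k) (i0.1 + 2) :=
    nthLevel_lt_nthLevel (by omega) (by omega)
  have hvwk : v k < w k := by
    show nthLevel (Y k) (y k).toNat < nthLevel (Y k) ((y + e) k).toNat
    rw [hyk, hy'k]; exact hlt
  have hvw : v ≠ w := by
    intro h
    exact absurd (congrArg (fun z : EuclideanSpace ℝ (Fin p) => z k) h) (ne_of_lt hvwk)
  have hvwj : ∀ j, j ≠ k → v j = w j := by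
    intro j hj
    simp [hv, hw, he, hj]
  -- compute distance
  have hdist : dist v w = w k - v k := by
    rw [EuclideanSpace.dist_eq]
    rw [Finset.sum_eq_single k]
    · rw [Real.sqrt_sq_eq_abs, Real.dist_eq, abs_abs, abs_of_nonpos (by linarith)]
      ring
    · intro j _ hj
      rw [hvwj j hj]; simp
    · simp
  calc (design p L s Y 0).einfsep ≤ edist v w :=
        Set.einfsep_le_edist_of_mem hvD hwD hvw
    _ = ENNReal.ofReal (dist v w) := edist_dist v w
    _ ≤ ENNReal.ofReal (dplus (Y k)) := by
        have hwv : w k - v k = nthLevel (Y k) (i0.1 + 2) - nthLevel (Y k) i0.1 := by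
          show nthLevel (Y k) ((y + e) k).toNat - nthLevel (Y k) (y k).toNat = _
          rw [hyk, hy'k]
        rw [hdist, hdplus, hwv]
end

section
/- Let j ≥ 1, let 𝓛 be a standard interleaved lattice in dimension j, and let 𝓛′ be an additive subgroup of ℤ^j with (2ℤ)^j ⊆ 𝓛′ ⊆ 𝓛 such that 𝓛 ∖ 𝓛′ = {y + x : y ∈ 𝓛′} for some x ∈ 𝓛 ∖ 𝓛′ (i.e., 𝓛′ has index 2 in 𝓛). Define 𝓛_new = {(y, c) ∈ ℤ^{j+1} : y ∈ 𝓛′ and c is even} ∪ {(y, c) ∈ ℤ^{j+1} : y ∈ 𝓛 ∖ 𝓛′ and c is odd}. Then 𝓛_new is a standard interleaved lattice in dimension j + 1. -/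
open scoped BigOperators Classical

/-!
Since `L ∖ L'` is a single coset of `L'`, a sum of two elements of `L` lies in `L'` exactly
when both or neither summand does: membership in `L'` behaves like a parity on `L`. Hence the
pairs `(y, c)` with `y ∈ L` and `y ∈ L' ↔ Even c` form a subgroup of `ℤ^j × ℤ`, and this is the
new lattice. It contains `(2ℤ)^(j+1)` because `(2ℤ)^j ⊆ L'`; on the first `j` coordinates any
value is reached by choosing `c ∈ {0, 1}` to match `y`, and on the last one by choosing
`y ∈ {0, x}` to match `c`.
-/

namespace AddSubgroup

variable {G : Type*} [AddCommGroup G]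

theorem sub_mem_of_diff_eq_image_add {L L' : AddSubgroup G} {x : G}
    (hcoset : {y : G | y ∈ L ∧ y ∉ L'} = (fun y => y + x) '' (L' : Set G))
    {a b : G} (ha : a ∈ L) (ha' : a ∉ L') (hb : b ∈ L) (hb' : b ∉ L') : a - b ∈ L' := by
  obtain ⟨a₀, ha₀, rfl⟩ : a ∈ (fun y => y + x) '' (L' : Set G) := hcoset ▸ ⟨ha, ha'⟩
  obtain ⟨b₀, hb₀, rfl⟩ : b ∈ (fun y => y + x) '' (L' : Set G) := hcoset ▸ ⟨hb, hb'⟩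
  simpa using L'.sub_mem ha₀ hb₀

-- `hindex` says that `L'` has index at most two in `L`.
theorem add_mem_iff_mem_iff_mem {L L' : AddSubgroup G}
    (hindex : ∀ a ∈ L, a ∉ L' → ∀ b ∈ L, b ∉ L' → a - b ∈ L')
    {a b : G} (ha : a ∈ L) (hb : b ∈ L) : a + b ∈ L' ↔ (a ∈ L' ↔ b ∈ L') := by
  by_cases ha' : a ∈ L' <;> by_cases hb' : b ∈ L'
  · simpa [ha', hb'] using L'.add_mem ha' hb'
  · simpa [ha', hb'] using (L'.add_mem_cancel_left ha').not.mpr hb'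
  · simpa [ha', hb'] using (L'.add_mem_cancel_right hb').not.mpr ha'
  · have hnegb : -b ∉ L' := fun h => hb' (by simpa using L'.neg_mem h)
    simpa [ha', hb'] using hindex a ha ha' (-b) (L.neg_mem hb) hnegb

def parityExtension (L L' : AddSubgroup G)
    (hindex : ∀ a ∈ L, a ∉ L' → ∀ b ∈ L, b ∉ L' → a - b ∈ L') : AddSubgroup (G × ℤ) where
  carrier := {p | p.1 ∈ L ∧ (p.1 ∈ L' ↔ Even p.2)}
  zero_mem' := ⟨L.zero_mem, by simp⟩
  add_mem' := by
    rintro ⟨a, m⟩ ⟨b, n⟩ ⟨ha, ham⟩ ⟨hb, hbn⟩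
    refine ⟨L.add_mem ha hb, ?_⟩
    change a + b ∈ L' ↔ Even (m + n)
    rw [add_mem_iff_mem_iff_mem hindex ha hb, ham, hbn, Int.even_add]
  neg_mem' := by
    rintro ⟨a, m⟩ ⟨ha, ham⟩
    exact ⟨L.neg_mem ha, by simpa [neg_mem_iff] using ham⟩

@[simp]
theorem mem_parityExtension {L L' : AddSubgroup G}
    {hindex : ∀ a ∈ L, a ∉ L' → ∀ b ∈ L, b ∉ L' → a - b ∈ L'} {p : G × ℤ} :
    p ∈ parityExtension L L' hindex ↔ p.1 ∈ L ∧ (p.1 ∈ L' ↔ Even p.2) :=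
  Iff.rfl

end AddSubgroup

def initLastHom (j : ℕ) : (Fin (j + 1) → ℤ) →+ (Fin j → ℤ) × ℤ where
  toFun v := (Fin.init v, v (Fin.last j))
  map_zero' := rfl
  map_add' _ _ := rfl

@[simp]
theorem initLastHom_apply {j : ℕ} (v : Fin (j + 1) → ℤ) :
    initLastHom j v = (Fin.init v, v (Fin.last j)) :=
  rfl

open AddSubgroup

theorem isStdIL_comap_parityExtension {j : ℕ} {L L' : AddSubgroup (Fin j → ℤ)}
    (hindex : ∀ a ∈ L, a ∉ L' → ∀ b ∈ L, b ∉ L' → a - b ∈ L')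
    (hL : IsStdIL j L) (hsub : ∀ x : Fin j → ℤ, (∀ k, (2 : ℤ) ∣ x k) → x ∈ L')
    (hL'L : L' ≤ L) {x : Fin j → ℤ} (hxL : x ∈ L) (hxL' : x ∉ L') :
    IsStdIL (j + 1) ((parityExtension L L' hindex).comap (initLastHom j)) := by
  refine ⟨fun v hv => ?_, fun k z => ?_⟩
  · have hinit : Fin.init v ∈ L' := hsub _ fun k => hv k.castSucc
    simpa [hinit, hL'L hinit, even_iff_two_dvd] using hv (Fin.last j)
  induction k using Fin.lastCases with
  | last =>
    by_cases hz : Even z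
    · exact ⟨Fin.snoc 0 z, by simp [hz], by simp⟩
    · exact ⟨Fin.snoc x z, by simp [hxL, hxL', hz], by simp⟩
  | cast i =>
    obtain ⟨w, hw, rfl⟩ := hL.2 i z
    by_cases hw' : w ∈ L'
    · exact ⟨Fin.snoc w 0, by simp [hw, hw'], by simp⟩
    · exact ⟨Fin.snoc w 1, by simp [hw, hw'], by simp⟩

theorem stmt_19_general (j : ℕ) (L L' : AddSubgroup (Fin j → ℤ))
    (hL : IsStdIL j L)
    (hsub : ∀ x : Fin j → ℤ, (∀ k, (2 : ℤ) ∣ x k) → x ∈ L')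
    (hL'L : (L' : Set (Fin j → ℤ)) ⊆ (L : Set (Fin j → ℤ)))
    (x : Fin j → ℤ) (hxL : x ∈ L) (hxL' : x ∉ L')
    (hcoset : {y : Fin j → ℤ | y ∈ L ∧ y ∉ L'} =
      (fun y => y + x) '' (L' : Set (Fin j → ℤ))) :
    ∃ M : AddSubgroup (Fin (j + 1) → ℤ),
      (M : Set (Fin (j + 1) → ℤ)) =
        {v : Fin (j + 1) → ℤ |
          (Fin.init v ∈ L' ∧ Even (v (Fin.last j))) ∨
          ((Fin.init v ∈ L ∧ Fin.init v ∉ L') ∧ Odd (v (Fin.last j)))} ∧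
      IsStdIL (j + 1) M := by
  have hindex : ∀ a ∈ L, a ∉ L' → ∀ b ∈ L, b ∉ L' → a - b ∈ L' :=
    fun _ ha ha' _ hb hb' => sub_mem_of_diff_eq_image_add hcoset ha ha' hb hb'
  refine ⟨(parityExtension L L' hindex).comap (initLastHom j), ?_,
    isStdIL_comap_parityExtension hindex hL hsub hL'L hxL hxL'⟩
  ext v
  by_cases hv : Fin.init v ∈ L'
  · have hvL : Fin.init v ∈ L := hL'L hv
    simp [hv, hvL]
  · simp [hv, Int.not_even_iff_odd]

/-- the lattice-extension construction yields a standard interleaved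
lattice in dimension `j + 1`. -/
theorem stmt_19 (j : ℕ) (hj : 1 ≤ j) (L L' : AddSubgroup (Fin j → ℤ))
    (hL : IsStdIL j L)
    (hsub : ∀ x : Fin j → ℤ, (∀ k, (2 : ℤ) ∣ x k) → x ∈ L')
    (hL'L : (L' : Set (Fin j → ℤ)) ⊆ (L : Set (Fin j → ℤ)))
    (x : Fin j → ℤ) (hxL : x ∈ L) (hxL' : x ∉ L')
    (hcoset : {y : Fin j → ℤ | y ∈ L ∧ y ∉ L'} =
      (fun y => y + x) '' (L' : Set (Fin j → ℤ))) :
    ∃ M : AddSubgroup (Fin (j + 1) → ℤ),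
      (M : Set (Fin (j + 1) → ℤ)) =
        {v : Fin (j + 1) → ℤ |
          (Fin.init v ∈ L' ∧ Even (v (Fin.last j))) ∨
          ((Fin.init v ∈ L ∧ Fin.init v ∉ L') ∧ Odd (v (Fin.last j)))} ∧
      IsStdIL (j + 1) M :=
  stmt_19_general j L L' hL hsub hL'L x hxL hxL' hcoset
end
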